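/- arXiv:1907.02446 — 12 statements merged into one kernel-verified Lean document; each statement's English description precedes it below -/
import Mathlib

section
/- A compact metric dynamical system (X,f) has s-limit shadowing if and only if for every ε>0 there exists δ>0 such that every asymptotic δ-pseudo-orbit is asymptotically ε-shadowed. (I.e., condition (2) of s-limit shadowing alone implies shadowing.) -/
open Filter Topology

/-- a compact metric system has s-limit shadowing iff condition (2) alone
holds: for every ε > 0 there is δ > 0 such that every asymptotic δ-pseudo-orbit is
asymptotically ε-shadowed. -/
theorem sLimitShadowing_iff_condition_two
    {X : Type*} [MetricSpace X] [CompactSpace X]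
    (f : X → X) (hf : Continuous f) :
    (∀ ε > (0:ℝ), ∃ δ > (0:ℝ),
      (∀ x : ℕ → X, (∀ i, dist (f (x i)) (x (i + 1)) < δ) →
        ∃ z : X, ∀ i, dist (f^[i] z) (x i) < ε) ∧
      (∀ x : ℕ → X, (∀ i, dist (f (x i)) (x (i + 1)) < δ) →
        Tendsto (fun i => dist (f (x i)) (x (i + 1))) atTop (nhds 0) →
        ∃ z : X, (∀ i, dist (f^[i] z) (x i) < ε) ∧
          Tendsto (fun i => dist (f^[i] z) (x i)) atTop (nhds 0)))
    ↔
    (∀ ε > (0:ℝ), ∃ δ > (0:ℝ),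
      ∀ x : ℕ → X, (∀ i, dist (f (x i)) (x (i + 1)) < δ) →
        Tendsto (fun i => dist (f (x i)) (x (i + 1))) atTop (nhds 0) →
        ∃ z : X, (∀ i, dist (f^[i] z) (x i) < ε) ∧
          Tendsto (fun i => dist (f^[i] z) (x i)) atTop (nhds 0)) := by
  constructor
  · intro h ε hε
    obtain ⟨δ, hδ, _, h2⟩ := h ε hε
    exact ⟨δ, hδ, h2⟩
  · intro h ε hε
    obtain ⟨δ, hδ, h2⟩ := h (ε / 2) (by positivity)
    refine ⟨min δ ε, lt_min hδ hε, ?_, ?_⟩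
    · intro x hx
      have key : ∀ n : ℕ, ∃ z : X, ∀ i ≤ n, dist (f^[i] z) (x i) < ε / 2 := by
        intro n
        set y : ℕ → X := fun i => if i ≤ n then x i else f^[i - n] (x n) with hy
        have hyd : ∀ i, dist (f (y i)) (y (i + 1)) < δ := by
          intro i
          rcases lt_trichotomy i n with hi | hi | hi
          · have h1 : y i = x i := by simp [hy, hi.le]
            have h2 : y (i + 1) = x (i + 1) := by simp [hy, Nat.succ_le_of_lt hi]
            rw [h1, h2]
            exact (hx i).trans_le (min_le_left _ _)
          · subst hi
            have h1 : y i = x i := by simp [hy]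
            have h2 : y (i + 1) = f (x i) := by
              simp only [hy]
              rw [if_neg (by omega)]
              simp
            rw [h1, h2, dist_self]
            exact hδ
          · have h1 : y i = f^[i - n] (x n) := by
              simp only [hy]; rw [if_neg (by omega)]
            have h2 : y (i + 1) = f^[i - n + 1] (x n) := by
              simp only [hy]; rw [if_neg (by omega)]
              congr 1; omega
            rw [h1, h2, Function.iterate_succ_apply', dist_self]
            exact hδ
        have hyt : Tendsto (fun i => dist (f (y i)) (y (i + 1))) atTop (nhds 0) := by
          apply Tendsto.congr' _ tendsto_const_nhds
          filter_upwards [eventually_ge_atTop (n + 1)] with i hi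
          have h1 : y i = f^[i - n] (x n) := by
            simp only [hy]; rw [if_neg (by omega)]
          have h2 : y (i + 1) = f^[i - n + 1] (x n) := by
            simp only [hy]; rw [if_neg (by omega)]
            congr 1; omega
          rw [h1, h2, Function.iterate_succ_apply', dist_self]
        obtain ⟨z, hz, _⟩ := h2 y hyd hyt
        refine ⟨z, fun i hi => ?_⟩
        simpa only [hy, if_pos hi] using hz i
      choose zs hzs using key
      obtain ⟨z, -, φ, hφ, hzlim⟩ :=
        isCompact_univ.tendsto_subseq (fun n => (Set.mem_univ (zs n)))
      refine ⟨z, fun i => ?_⟩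
      have hcont : Tendsto (fun k => f^[i] (zs (φ k))) atTop (nhds (f^[i] z)) :=
        ((hf.iterate i).continuousAt.tendsto).comp hzlim
      have hdist : Tendsto (fun k => dist (f^[i] (zs (φ k))) (x i)) atTop
          (nhds (dist (f^[i] z) (x i))) := hcont.dist tendsto_const_nhds
      have hle : dist (f^[i] z) (x i) ≤ ε / 2 := by
        apply le_of_tendsto hdist
        filter_upwards [eventually_ge_atTop i] with k hk
        exact (hzs (φ k) i (hk.trans (hφ.le_apply))).le
      linarith
    · intro x hx ht
      obtain ⟨z, hz, hzt⟩ := h2 x (fun i => (hx i).trans_le (min_le_left _ _)) ht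
      exact ⟨z, fun i => (hz i).trans (by linarith), hzt⟩
end

section
/- If (X,f) is a compact metric dynamical system with h-shadowing, then the induced system (F_2(X), f_2) on the 2-fold symmetric product has h-shadowing. -/
open Filter Topology TopologicalSpace Metric

/-- The induced map on the hyperspace of nonempty compact subsets. -/
def hyperMap {X : Type*} [MetricSpace X] (f : X → X) (hf : Continuous f) :
    NonemptyCompacts X → NonemptyCompacts X :=
  fun A => ⟨⟨f '' A, A.isCompact.image hf⟩, A.nonempty.image f⟩

/-- A member of the 2-fold symmetric product `F₂(X)`: a nonempty compact set with at
most two points. -/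
def IsF2 {X : Type*} [MetricSpace X] (A : NonemptyCompacts X) : Prop :=
  ∃ a b : X, (A : Set X) = {a, b}

lemma hyperMap_iterate_coe {X : Type*} [MetricSpace X] (f : X → X) (hf : Continuous f)
    (B : NonemptyCompacts X) (i : ℕ) :
    ((hyperMap f hf)^[i] B : Set X) = f^[i] '' B := by
  induction i with
  | zero => simp
  | succ n ih =>
    rw [Function.iterate_succ_apply']
    show f '' ((hyperMap f hf)^[n] B : Set X) = _
    rw [ih]
    ext x
    simp [Set.image_image, Function.iterate_succ_apply']

/-- Matching lemma for two-point sets with small Hausdorff distance. -/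
lemma pair_match {X : Type*} [MetricSpace X] {p q a b : X} {δ : ℝ}
    (h : hausdorffDist ({p, q} : Set X) {a, b} < δ) :
    (dist p a < δ ∧ dist q b < δ) ∨ (dist p b < δ ∧ dist q a < δ) := by
  have fin : EMetric.hausdorffEdist ({p, q} : Set X) {a, b} ≠ ⊤ :=
    hausdorffEdist_ne_top_of_nonempty_of_bounded (by simp) (by simp)
      (Set.Finite.isBounded (by simp)) (Set.Finite.isBounded (by simp))
  have hp : ∃ y ∈ ({a, b} : Set X), dist p y < δ :=
    exists_dist_lt_of_hausdorffDist_lt (x := p) (by simp) h fin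
  have hq : ∃ y ∈ ({a, b} : Set X), dist q y < δ :=
    exists_dist_lt_of_hausdorffDist_lt (x := q) (by simp) h fin
  have ha : ∃ y ∈ ({p, q} : Set X), dist y a < δ :=
    exists_dist_lt_of_hausdorffDist_lt' (y := a) (by simp) h fin
  have hb : ∃ y ∈ ({p, q} : Set X), dist y b < δ :=
    exists_dist_lt_of_hausdorffDist_lt' (y := b) (by simp) h fin
  simp only [Set.mem_insert_iff, Set.mem_singleton_iff, exists_eq_or_imp, exists_eq_left] at hp hq ha hb
  by_cases h1 : dist p a < δ
  · by_cases h2 : dist q b < δ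
    · exact Or.inl ⟨h1, h2⟩
    · right
      exact ⟨hb.resolve_right h2, hq.resolve_right h2⟩
  · right
    exact ⟨hp.resolve_left h1, ha.resolve_left h1⟩

/-- h-shadowing of (X, f) implies h-shadowing of the induced system on the
2-fold symmetric product F₂(X) (with the Hausdorff metric). -/
theorem hShadowing_F2_of_hShadowing
    {X : Type*} [MetricSpace X] [CompactSpace X]
    (f : X → X) (hf : Continuous f)
    (hsh : ∀ ε > (0:ℝ), ∃ δ > (0:ℝ), ∀ m : ℕ, ∀ x : ℕ → X,
      (∀ i < m, dist (f (x i)) (x (i + 1)) < δ) →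
      ∃ y : X, (∀ i < m, dist (f^[i] y) (x i) < ε) ∧ f^[m] y = x m) :
    ∀ ε > (0:ℝ), ∃ δ > (0:ℝ), ∀ m : ℕ, ∀ A : ℕ → NonemptyCompacts X,
      (∀ i, IsF2 (A i)) →
      (∀ i < m, dist (hyperMap f hf (A i)) (A (i + 1)) < δ) →
      ∃ B : NonemptyCompacts X, IsF2 B ∧
        (∀ i < m, dist ((hyperMap f hf)^[i] B) (A i) < ε) ∧
        (hyperMap f hf)^[m] B = A m := by
  intro ε hε
  obtain ⟨δ, hδ, hδsh⟩ := hsh (ε/2) (by linarith)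
  refine ⟨δ, hδ, ?_⟩
  intro m A hA hpo
  -- choose representatives
  choose a b hab using hA
  -- build matched pair sequence
  let u : ℕ → X × X := fun n => Nat.rec (a 0, b 0)
    (fun i p => if dist (f p.1) (a (i+1)) < δ ∧ dist (f p.2) (b (i+1)) < δ
      then (a (i+1), b (i+1)) else (b (i+1), a (i+1))) n
  have hu0 : u 0 = (a 0, b 0) := rfl
  have husucc : ∀ n, u (n+1) = if dist (f (u n).1) (a (n+1)) < δ ∧ dist (f (u n).2) (b (n+1)) < δ
      then (a (n+1), b (n+1)) else (b (n+1), a (n+1)) := fun n => rfl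
  have huset : ∀ i, ({(u i).1, (u i).2} : Set X) = (A i : Set X) := by
    intro i
    cases i with
    | zero => rw [hab 0]; rfl
    | succ n =>
      rw [hab (n+1), husucc n]
      split_ifs <;> simp [Set.pair_comm]
  have hustep : ∀ i < m, dist (f (u i).1) (u (i+1)).1 < δ ∧ dist (f (u i).2) (u (i+1)).2 < δ := by
    intro i hi
    have hd : hausdorffDist ({f (u i).1, f (u i).2} : Set X) {a (i+1), b (i+1)} < δ := by
      have := hpo i hi
      rw [NonemptyCompacts.dist_eq] at this
      have himg : (hyperMap f hf (A i) : Set X) = {f (u i).1, f (u i).2} := by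
        show f '' (A i : Set X) = _
        rw [← huset i, Set.image_insert_eq, Set.image_singleton]
      rw [himg, hab (i+1)] at this
      exact this
    have key := pair_match hd
    rw [husucc i]
    split_ifs with h
    · exact h
    · rcases key with h' | h'
      · exact absurd h' h
      · exact h'
  obtain ⟨y, hy, hym⟩ := hδsh m (fun i => (u i).1) (fun i hi => (hustep i hi).1)
  obtain ⟨z, hz, hzm⟩ := hδsh m (fun i => (u i).2) (fun i hi => (hustep i hi).2)
  refine ⟨⟨⟨{y, z}, (Set.toFinite _).isCompact⟩, by simp⟩,
    ⟨y, z, rfl⟩, ?_, ?_⟩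
  · intro i hi
    rw [NonemptyCompacts.dist_eq, hyperMap_iterate_coe]
    show hausdorffDist (f^[i] '' {y, z}) (A i : Set X) < ε
    rw [Set.image_insert_eq, Set.image_singleton, ← huset i]
    have hle : hausdorffDist ({f^[i] y, f^[i] z} : Set X) {(u i).1, (u i).2} ≤ ε/2 := by
      apply hausdorffDist_le_of_mem_dist (by linarith)
      · rintro x (rfl | rfl)
        · exact ⟨(u i).1, by simp, (hy i hi).le⟩
        · exact ⟨(u i).2, by simp, (hz i hi).le⟩
      · rintro x (rfl | rfl)
        · exact ⟨f^[i] y, by simp, by rw [dist_comm]; exact (hy i hi).le⟩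
        · exact ⟨f^[i] z, by simp, by rw [dist_comm]; exact (hz i hi).le⟩
    linarith
  · apply NonemptyCompacts.ext
    rw [hyperMap_iterate_coe]
    show f^[m] '' {y, z} = (A m : Set X)
    rw [Set.image_insert_eq, Set.image_singleton, hym, hzm, huset m]
end

section
/- Let f be the standard tent map on [0,1] and n ≥ 3. Then the induced map f_n on the n-fold symmetric product F_n([0,1]) does not have shadowing. -/
open Filter Topology TopologicalSpace

/-- The standard tent map on the reals. -/
noncomputable def tent : ℝ → ℝ := fun x => if x ≤ 1 / 2 then 2 * x else 2 * (1 - x)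

lemma tent_eq (x : ℝ) : tent x = 1 - |2 * x - 1| := by
  unfold tent
  split_ifs with h
  · rw [abs_of_nonpos (by linarith)]; ring
  · rw [abs_of_nonneg (by linarith)]; ring

lemma tent_continuous : Continuous tent := by
  have h : tent = fun x => 1 - |2 * x - 1| := funext tent_eq
  rw [h]; continuity

lemma tent_mem {x : ℝ} (hx : x ∈ Set.Icc (0:ℝ) 1) : tent x ∈ Set.Icc (0:ℝ) 1 := by
  rcases hx with ⟨h0, h1⟩
  unfold tent
  split_ifs with h <;> constructor <;> linarith

/-- The tent map as a self-map of the unit interval. -/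
noncomputable def tentI : Set.Icc (0:ℝ) 1 → Set.Icc (0:ℝ) 1 :=
  fun x => ⟨tent x, tent_mem x.2⟩

lemma tentI_continuous : Continuous tentI :=
  Continuous.subtype_mk (tent_continuous.comp continuous_subtype_val) _

/-- Membership in the n-fold symmetric product `Fₙ(X)`: a nonempty compact set with at
most n points. -/
def IsFn {X : Type*} [MetricSpace X] (n : ℕ) (A : NonemptyCompacts X) : Prop :=
  ∃ S : Finset X, (↑S : Set X) = (A : Set X) ∧ S.card ≤ n

namespace TentAux

abbrev I01 := Set.Icc (0:ℝ) 1

lemma tent_le (x : ℝ) (h : x ≤ 1/2) : tent x = 2 * x := if_pos h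

lemma tent_gt (x : ℝ) (h : 1/2 ≤ x) : tent x = 2 * (1 - x) := by
  unfold tent
  split_ifs with h'
  · have : x = 1/2 := le_antisymm h' h
    rw [this]; norm_num
  · rfl

lemma tentI_val (x : I01) : (tentI x).1 = tent x.1 := rfl

/-- clamp a real into [0,1] -/
noncomputable def cl (x : ℝ) : I01 :=
  ⟨max 0 (min 1 x), ⟨le_max_left _ _, max_le (by norm_num) (min_le_left _ _)⟩⟩

lemma cl_val {x : ℝ} (h0 : 0 ≤ x) (h1 : x ≤ 1) : (cl x).1 = x := by
  simp [cl, min_eq_right h1, max_eq_right, h0]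

noncomputable def zpt : I01 := ⟨0, by norm_num⟩
noncomputable def cpt : I01 := ⟨2/3, by norm_num⟩

lemma tentI_zpt : tentI zpt = zpt := by
  apply Subtype.ext
  show tent 0 = 0
  rw [tent_le 0 (by norm_num)]; ring

lemma tentI_cpt : tentI cpt = cpt := by
  apply Subtype.ext
  show tent (2/3) = 2/3
  rw [tent_gt (2/3) (by norm_num)]; norm_num

lemma tentI_one (x : I01) (hx : x.1 = 1) : tentI x = zpt := by
  apply Subtype.ext
  show tent x.1 = 0
  rw [hx, tent_gt 1 (by norm_num)]; norm_num

lemma tentI_zero (x : I01) (hx : x.1 = 0) : tentI x = zpt := by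
  apply Subtype.ext
  show tent x.1 = 0
  rw [hx, tent_le 0 (by norm_num)]; ring

end TentAux

namespace TentAux

noncomputable def dl (T : ℕ) : ℝ := 1/(6 * 2^T)

lemma dl_pos (T : ℕ) : 0 < dl T := by
  unfold dl; positivity

lemma pow_dl (T : ℕ) : (2:ℝ)^T * dl T = 1/6 := by
  unfold dl
  field_simp

lemma abs_term (T m : ℕ) : |(-2:ℝ)^m * dl T| = 2^m * dl T := by
  rw [abs_mul, abs_pow, abs_of_pos (dl_pos T)]
  norm_num

noncomputable def tr (T m : ℕ) : ℝ := 2/3 + (-2)^m * dl T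

lemma tr_bounds {T m : ℕ} (h : m ≤ T) : 1/2 ≤ tr T m ∧ tr T m ≤ 5/6 := by
  have habs : |(-2:ℝ)^m * dl T| ≤ 1/6 := by
    rw [abs_term]
    calc (2:ℝ)^m * dl T ≤ 2^T * dl T := by
          apply mul_le_mul_of_nonneg_right _ (dl_pos T).le
          exact pow_le_pow_right₀ (by norm_num) h
      _ = 1/6 := pow_dl T
  have h1 := abs_le.1 habs
  unfold tr
  constructor <;> linarith [h1.1, h1.2]

lemma tr_half {T : ℕ} (hT : Odd T) : tr T T = 1/2 := by
  unfold tr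
  rw [hT.neg_pow]
  have := pow_dl T
  linarith

lemma tr_top {T : ℕ} (hT : Odd T) : tr T (T+1) = 1 := by
  unfold tr
  have he : Even (T+1) := Odd.add_one hT
  rw [he.neg_pow]
  have h1 := pow_dl T
  have : (2:ℝ)^(T+1) * dl T = 1/3 := by
    rw [pow_succ]
    linarith [pow_dl T]
  linarith

lemma tent_tr {T m : ℕ} (h : m ≤ T) : tent (tr T m) = tr T (m+1) := by
  have hb := tr_bounds h
  rw [tent_gt _ hb.1]
  unfold tr
  rw [pow_succ]
  ring

lemma tr_nonneg {T m : ℕ} (hT : Odd T) (h : m ≤ T + 1) : 0 ≤ tr T m ∧ tr T m ≤ 1 := by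
  rcases Nat.lt_or_ge m (T+1) with h'|h'
  · have := tr_bounds (Nat.lt_succ_iff.1 h')
    constructor <;> linarith [this.1, this.2]
  · have hm : m = T + 1 := le_antisymm h h'
    rw [hm, tr_top hT]
    norm_num

end TentAux
namespace TentAux

/-- underlying set at phase p -/
noncomputable def CC (T : ℕ) : ℕ → Set I01
  | 0 => {zpt, cpt}
  | (m+1) => {zpt, cpt, cl (tr T m)}

lemma CC_finite (T p : ℕ) : (CC T p).Finite := by
  cases p with
  | zero => exact (Set.finite_singleton _).insert _
  | succ m => exact ((Set.finite_singleton _).insert _).insert _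

lemma CC_nonempty (T p : ℕ) : (CC T p).Nonempty := by
  cases p <;> exact ⟨zpt, by unfold CC; simp⟩

noncomputable def Cpt (T p : ℕ) : NonemptyCompacts I01 :=
  ⟨⟨CC T p, (CC_finite T p).isCompact⟩, CC_nonempty T p⟩

lemma Cpt_coe (T p : ℕ) : (Cpt T p : Set I01) = CC T p := rfl

lemma CC_mem_vals {T p : ℕ} (hT : Odd T) (hp : p ≤ T + 2) {x : I01}
    (hx : x ∈ CC T p) : x.1 = 0 ∨ (1/2 ≤ x.1) := by
  cases p with
  | zero =>
    rcases hx with h|h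
    · left; rw [h]; rfl
    · right; rw [Set.mem_singleton_iff] at h; rw [h]; norm_num [cpt]
  | succ m =>
    rcases hx with h|h|h
    · left; rw [h]; rfl
    · right; rw [h]; norm_num [cpt]
    · right
      rw [Set.mem_singleton_iff] at h
      have hm : m ≤ T + 1 := by omega
      have hb := tr_nonneg hT hm
      rw [h, cl_val hb.1 hb.2]
      rcases Nat.lt_or_ge m (T+1) with h'|h'
      · exact (tr_bounds (Nat.lt_succ_iff.1 h')).1
      · have : m = T+1 := le_antisymm hm h'
        rw [this, tr_top hT]; norm_num

lemma IsFn_Cpt {n : ℕ} (hn : 3 ≤ n) (T p : ℕ) : IsFn n (Cpt T p) := by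
  classical
  cases p with
  | zero =>
    refine ⟨{zpt, cpt}, ?_, ?_⟩
    · simp [Cpt_coe, CC]
    · calc ({zpt, cpt} : Finset I01).card ≤ 2 := by
            apply le_trans (Finset.card_insert_le _ _); simp
        _ ≤ n := by omega
  | succ m =>
    refine ⟨{zpt, cpt, cl (tr T m)}, ?_, ?_⟩
    · simp [Cpt_coe, CC]
    · calc ({zpt, cpt, cl (tr T m)} : Finset I01).card ≤ 3 := by
            apply le_trans (Finset.card_insert_le _ _)
            have := Finset.card_insert_le cpt ({cl (tr T m)} : Finset I01)
            simp at this ⊢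
            omega
        _ ≤ n := hn

end TentAux
namespace TentAux

lemma hyperMap_coe (X : NonemptyCompacts I01) :
    (hyperMap tentI tentI_continuous X : Set I01) = tentI '' X := rfl

lemma image_CC0 (T : ℕ) : tentI '' CC T 0 = CC T 0 := by
  show tentI '' {zpt, cpt} = {zpt, cpt}
  rw [Set.image_insert_eq, Set.image_singleton, tentI_zpt, tentI_cpt]

lemma cl_tr_val {T m : ℕ} (hT : Odd T) (hm : m ≤ T + 1) : (cl (tr T m)).1 = tr T m :=
  cl_val (tr_nonneg hT hm).1 (tr_nonneg hT hm).2

lemma image_CC_succ {T m : ℕ} (hT : Odd T) (hm : m ≤ T) :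
    tentI '' CC T (m+1) = CC T (m+2) := by
  show tentI '' {zpt, cpt, cl (tr T m)} = {zpt, cpt, cl (tr T (m+1))}
  rw [Set.image_insert_eq, Set.image_insert_eq, Set.image_singleton, tentI_zpt, tentI_cpt]
  have : tentI (cl (tr T m)) = cl (tr T (m+1)) := by
    apply Subtype.ext
    rw [tentI_val, cl_tr_val hT (by omega), cl_tr_val hT (by omega), tent_tr hm]
  rw [this]

lemma image_CC_last {T : ℕ} (hT : Odd T) :
    tentI '' CC T (T+2) = CC T 0 := by
  show tentI '' {zpt, cpt, cl (tr T (T+1))} = {zpt, cpt}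
  rw [Set.image_insert_eq, Set.image_insert_eq, Set.image_singleton, tentI_zpt, tentI_cpt,
    tentI_one _ (by rw [cl_tr_val hT (le_refl _), tr_top hT])]
  ext x
  simp [Set.mem_insert_iff]
  tauto

lemma hyper_eq_succ {T m : ℕ} (hT : Odd T) (hm : m ≤ T) :
    hyperMap tentI tentI_continuous (Cpt T (m+1)) = Cpt T (m+2) :=
  NonemptyCompacts.ext (by rw [hyperMap_coe, Cpt_coe, Cpt_coe, image_CC_succ hT hm])

lemma hyper_eq_last {T : ℕ} (hT : Odd T) :
    hyperMap tentI tentI_continuous (Cpt T (T+2)) = Cpt T 0 :=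
  NonemptyCompacts.ext (by rw [hyperMap_coe, Cpt_coe, Cpt_coe, image_CC_last hT])

lemma dist_step0 {T : ℕ} (hT : Odd T) :
    dist (hyperMap tentI tentI_continuous (Cpt T 0)) (Cpt T 1) ≤ dl T := by
  rw [Metric.NonemptyCompacts.dist_eq]
  have h0 : (hyperMap tentI tentI_continuous (Cpt T 0) : Set I01) = {zpt, cpt} := by
    rw [hyperMap_coe, Cpt_coe, image_CC0]; rfl
  rw [h0, Cpt_coe]
  show Metric.hausdorffDist _ ({zpt, cpt, cl (tr T 0)} : Set I01) ≤ dl T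
  apply Metric.hausdorffDist_le_of_mem_dist (dl_pos T).le
  · intro x hx
    refine ⟨x, ?_, by simp [(dl_pos T).le]⟩
    rcases hx with h|h
    · left; exact h
    · right; left; exact h
  · intro x hx
    rcases hx with h|h|h
    · exact ⟨zpt, Set.mem_insert _ _, by simp [h, (dl_pos T).le]⟩
    · exact ⟨cpt, by simp, by rw [h]; simp [(dl_pos T).le]⟩
    · rw [Set.mem_singleton_iff] at h
      refine ⟨cpt, by simp, ?_⟩
      rw [h, Subtype.dist_eq, cl_tr_val hT (by omega)]
      show |tr T 0 - 2/3| ≤ dl T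
      unfold tr
      rw [pow_zero]
      rw [show (2/3 + 1 * dl T - 2/3 : ℝ) = dl T by ring]
      rw [abs_of_pos (dl_pos T)]

end TentAux
namespace TentAux

lemma val_succ (p : I01) (t : ℕ) : (tentI^[t+1] p).1 = tent ((tentI^[t] p).1) := by
  rw [Function.iterate_succ_apply']
  rfl

lemma escape (p : I01)
    (Hin : ∀ t : ℕ, (tentI^[t] p).1 < 1/20 ∨ 9/20 < (tentI^[t] p).1)
    (s : ℕ) (hs : |(tentI^[s] p).1 - 1/2| < 1/20) :
    (tentI^[s] p).1 = 1/2 := by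
  classical
  by_contra hne
  set v := (tentI^[s] p).1 with hv
  set w := v - 1/2 with hwdef
  have hw : w ≠ 0 := fun h => hne (by rw [hv]; linarith [hwdef ▸ h] )
  have hwa : |w| < 1/20 := hs
  have habs : 0 < |w| := abs_pos.2 hw
  have a1 : (tentI^[s+1] p).1 = 1 - 2 * |w| := by
    rw [val_succ]
    rcases le_or_gt v (1/2) with h|h
    · rw [tent_le _ h, abs_of_nonpos (by rw [hwdef]; linarith)]
      rw [hwdef]; ring
    · rw [tent_gt _ h.le, abs_of_pos (by rw [hwdef]; linarith)]
      rw [hwdef]; ring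
  have a2 : (tentI^[s+2] p).1 = 4 * |w| := by
    have : s + 2 = (s+1) + 1 := rfl
    rw [this, val_succ, a1, tent_gt _ (by rw [abs_lt] at hwa; linarith [hwa.1, hwa.2])]
    ring
  set u := 4 * |w| with hu
  have hu0 : 0 < u := by positivity
  have hu4 : u < 4/20 := by rw [hu]; linarith
  have claim : ∀ k, (∀ j, j < k → 2^j * u ≤ 1/20) → (tentI^[s+2+k] p).1 = 2^k * u := by
    intro k
    induction k with
    | zero => intro _; simpa using a2
    | succ m ih =>
      intro hsm
      have hm : (tentI^[s+2+m] p).1 = 2^m * u := ih (fun j hj => hsm j (by omega))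
      have hle : 2^m * u ≤ 1/20 := hsm m (by omega)
      have : s+2+(m+1) = (s+2+m)+1 := rfl
      rw [this, val_succ, hm, tent_le _ (by linarith), pow_succ]
      ring
  have hex : ∃ k, 1/20 < 2^k * u := by
    obtain ⟨k, hk⟩ := pow_unbounded_of_one_lt (1/(20*u)) (by norm_num : (1:ℝ) < 2)
    exact ⟨k, by rw [div_lt_iff₀ (by positivity)] at hk; nlinarith⟩
  set K := Nat.find hex with hK
  have hKlt : 1/20 < 2^K * u := Nat.find_spec hex
  have hKmin : ∀ j, j < K → 2^j * u ≤ 1/20 := fun j hj => le_of_not_gt (Nat.find_min hex hj)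
  have hval : (tentI^[s+2+K] p).1 = 2^K * u := claim K hKmin
  have hub : 2^K * u ≤ 8/20 := by
    rcases Nat.eq_zero_or_pos K with h0|h1
    · rw [h0]; norm_num; linarith
    · obtain ⟨m, hm⟩ : ∃ m, K = m+1 := ⟨K-1, by omega⟩
      have := hKmin m (by omega)
      rw [hm, pow_succ]
      linarith
  rcases Hin (s+2+K) with h|h
  · rw [hval] at h; linarith
  · rw [hval] at h; linarith

lemma zero_forever (p : I01) (s : ℕ) (hs : (tentI^[s] p).1 = 1/2) :
    ∀ t : ℕ, (tentI^[s+2+t] p).1 = 0 := by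
  have a1 : (tentI^[s+1] p).1 = 1 := by
    rw [val_succ, hs, tent_le _ (by norm_num)]; norm_num
  have a2 : (tentI^[s+2] p).1 = 0 := by
    have : s + 2 = (s+1)+1 := rfl
    rw [this, val_succ, a1, tent_gt _ (by norm_num)]; norm_num
  intro t
  induction t with
  | zero => simpa using a2
  | succ m ih =>
    have : s+2+(m+1) = (s+2+m)+1 := rfl
    rw [this, val_succ, ih, tent_le _ (by norm_num)]
    ring

lemma hyper_iter (k : ℕ) (B : NonemptyCompacts I01) :
    ((hyperMap tentI tentI_continuous)^[k] B : Set I01) = tentI^[k] '' (B : Set I01) := by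
  induction k with
  | zero => simp
  | succ m ih =>
    rw [Function.iterate_succ_apply', hyperMap_coe, ih, Function.iterate_succ',
      Set.image_comp]

end TentAux
open TentAux

/-- for n ≥ 3 the induced map of the tent map on the n-fold symmetric
product Fₙ([0,1]) does not have shadowing. -/
theorem tent_Fn_not_shadowing (n : ℕ) (hn : 3 ≤ n) :
    ¬ (∀ ε > (0:ℝ), ∃ δ > (0:ℝ), ∀ A : ℕ → NonemptyCompacts (Set.Icc (0:ℝ) 1),
      (∀ i, IsFn n (A i)) →
      (∀ i, dist (hyperMap tentI tentI_continuous (A i)) (A (i + 1)) < δ) →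
      ∃ B : NonemptyCompacts (Set.Icc (0:ℝ) 1), IsFn n B ∧
        ∀ i, dist ((hyperMap tentI tentI_continuous)^[i] B) (A i) < ε) := by
  intro H
  obtain ⟨δ, hδ, Hsh⟩ := H (1/20) (by norm_num)
  -- choose an odd T with dl T < δ
  obtain ⟨k, hk⟩ := pow_unbounded_of_one_lt (1/(6*δ)) (by norm_num : (1:ℝ) < 2)
  set T := 2*k+1 with hTdef
  have hT : Odd T := ⟨k, by omega⟩
  have hdl : dl T < δ := by
    have h2 : (2:ℝ)^k ≤ 2^T := pow_le_pow_right₀ (by norm_num) (by omega)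
    have hk1 : 1 < 2^k * (6*δ) := (div_lt_iff₀ (by positivity)).mp hk
    have hk2 : 1 < 2^T * (6*δ) := by nlinarith [pow_pos (by norm_num : (0:ℝ) < 2) k]
    unfold dl
    rw [div_lt_iff₀ (by positivity)]
    nlinarith
  -- the pseudo-orbit
  have hstep : ∀ i : ℕ, dist (hyperMap tentI tentI_continuous (Cpt T (i % (T+3))))
      (Cpt T ((i+1) % (T+3))) < δ := by
    intro i
    have h1 : (i+1) % (T+3) = (i % (T+3) + 1) % (T+3) := by
      conv_lhs => rw [Nat.add_mod]
      rw [Nat.mod_eq_of_lt (by omega : 1 < T+3)]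
    rw [h1]
    have hp : i % (T+3) < T+3 := Nat.mod_lt _ (by omega)
    generalize hgen : i % (T+3) = p at *
    cases p with
    | zero =>
      rw [Nat.mod_eq_of_lt (by omega : 0+1 < T+3)]
      exact lt_of_le_of_lt (dist_step0 hT) hdl
    | succ m =>
      rcases Nat.lt_or_ge m (T+1) with h|h
      · have hmT : m ≤ T := by omega
        rw [Nat.mod_eq_of_lt (by omega : m+1+1 < T+3)]
        rw [hyper_eq_succ hT hmT, dist_self]
        exact hδ
      · have hmeq : m = T+1 := by omega
        subst hmeq
        show dist (hyperMap tentI tentI_continuous (Cpt T (T+2))) (Cpt T ((T+3) % (T+3))) < δ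
        rw [Nat.mod_self, hyper_eq_last hT, dist_self]
        exact hδ
  obtain ⟨B, hBFn, hB⟩ := Hsh (fun i => Cpt T (i % (T+3))) (fun i => IsFn_Cpt hn T _) hstep
  -- basic facts about the shadowing
  have hfin : ∀ i : ℕ, EMetric.hausdorffEdist
      (((hyperMap tentI tentI_continuous)^[i] B : Set I01)) ((Cpt T (i % (T+3)) : Set I01)) ≠ ⊤ :=
    fun i => Metric.hausdorffEdist_ne_top_of_nonempty_of_bounded
      ((hyperMap tentI tentI_continuous)^[i] B).nonempty (Cpt T (i % (T+3))).nonempty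
      ((hyperMap tentI tentI_continuous)^[i] B).isCompact.isBounded
      (Cpt T (i % (T+3))).isCompact.isBounded
  have hBd : ∀ i : ℕ, Metric.hausdorffDist
      (((hyperMap tentI tentI_continuous)^[i] B : Set I01)) ((Cpt T (i % (T+3)) : Set I01))
      < 1/20 := fun i => by
    have := hB i
    rwa [Metric.NonemptyCompacts.dist_eq] at this
  have shadow_in : ∀ (t : ℕ) (pt : I01), pt ∈ (B : Set I01) →
      (tentI^[t] pt).1 < 1/20 ∨ 9/20 < (tentI^[t] pt).1 := by
    intro t pt hpt
    have hmem : tentI^[t] pt ∈ ((hyperMap tentI tentI_continuous)^[t] B : Set I01) := by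
      rw [hyper_iter]
      exact Set.mem_image_of_mem _ hpt
    obtain ⟨y, hy, hdy⟩ := Metric.exists_dist_lt_of_hausdorffDist_lt hmem (hBd t) (hfin t)
    have hyv := CC_mem_vals hT (by have := Nat.mod_lt t (show 0 < T+3 by omega); omega) hy
    rw [Subtype.dist_eq, Real.dist_eq] at hdy
    have hx0 : (0:ℝ) ≤ (tentI^[t] pt).1 := (tentI^[t] pt).2.1
    rcases hyv with h0|h12
    · left
      rw [h0] at hdy
      rw [abs_lt] at hdy
      linarith [hdy.2]
    · right
      rw [abs_lt] at hdy
      linarith [hdy.1]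
  -- the half-point servers
  have Hserv : ∀ j : ℕ, ∃ pt, pt ∈ (B : Set I01) ∧
      |(tentI^[(T+1) + j*(T+3)] pt).1 - 1/2| < 1/20 := by
    intro j
    have hmod : ((T+1) + j*(T+3)) % (T+3) = T+1 := by
      rw [Nat.add_mul_mod_self_right]
      exact Nat.mod_eq_of_lt (by omega)
    have hhalf : cl (tr T T) ∈ (Cpt T (((T+1) + j*(T+3)) % (T+3)) : Set I01) := by
      rw [hmod]
      show cl (tr T T) ∈ ({zpt, cpt, cl (tr T T)} : Set I01)
      right; right; rfl
    obtain ⟨x, hx, hdx⟩ := Metric.exists_dist_lt_of_hausdorffDist_lt' hhalf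
      (hBd ((T+1) + j*(T+3))) (hfin ((T+1) + j*(T+3)))
    rw [hyper_iter] at hx
    obtain ⟨pt, hpt, rfl⟩ := hx
    refine ⟨pt, hpt, ?_⟩
    rw [Subtype.dist_eq, Real.dist_eq, cl_tr_val hT (by omega), tr_half hT] at hdx
    exact hdx
  choose P hPmem hPlt using Hserv
  -- distinct servers for distinct cycles
  have key : ∀ j k2 : ℕ, j < k2 → P j ≠ P k2 := by
    intro j k2 hjk heq
    have Hin := fun t => shadow_in t (P j) (hPmem j)
    have h12 : (tentI^[(T+1) + j*(T+3)] (P j)).1 = 1/2 := escape _ Hin _ (hPlt j)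
    obtain ⟨d, rfl⟩ : ∃ d, k2 = j + (d+1) := ⟨k2 - j - 1, by omega⟩
    have hsk : (T+1) + (j + (d+1))*(T+3) = (((T+1) + j*(T+3)) + 2) + (T+1+d*(T+3)) := by ring
    have h0 : (tentI^[(T+1) + (j + (d+1))*(T+3)] (P j)).1 = 0 := by
      rw [hsk]
      exact zero_forever _ _ h12 _
    have hlt := hPlt (j + (d+1))
    rw [← heq, h0] at hlt
    have habs0 : |(0:ℝ) - 1/2| = 1/2 := by
      rw [abs_of_nonpos (by norm_num)]; norm_num
    rw [habs0] at hlt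
    norm_num at hlt
  have hinj : Function.Injective P := by
    intro a b hab
    rcases lt_trichotomy a b with h|h|h
    · exact absurd hab (key a b h)
    · exact h
    · exact absurd hab.symm (key b a h)
  have hinf : (B : Set I01).Infinite := Set.infinite_of_injective_forall_mem hinj hPmem
  obtain ⟨S, hS, _⟩ := hBFn
  exact hinf (hS ▸ S.finite_toSet)
end

section
/- If the hyperspace system (2^X, 2^f) has eventual shadowing, then the base system (X,f) has eventual shadowing. -/
open Filter Topology TopologicalSpace

/-! Points embed isometrically into the hyperspace as singletons, so a δ-pseudo-orbit `xᵢ` of `f`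
gives the δ-pseudo-orbit `{xᵢ}` of `2^f`, which is eventually ε-shadowed by the orbit of some
compact set `B`. Any `z ∈ B` then works: `fⁱ z` lies in `fⁱ(B)`, and a point of a set is no
farther from `y` than the Hausdorff distance of that set to `{y}`. -/

namespace TopologicalSpace.NonemptyCompacts

variable {X : Type*} [MetricSpace X]

theorem dist_le_dist_singleton_of_mem {K : NonemptyCompacts X} {x : X} (hx : x ∈ K) (y : X) :
    dist x y ≤ dist K {y} := by
  have hfin : Metric.hausdorffEDist (K : Set X) {y} ≠ ⊤ :=
    Metric.hausdorffEDist_ne_top_of_nonempty_of_bounded K.nonempty (Set.singleton_nonempty y)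
      K.isCompact.isBounded Bornology.isBounded_singleton
  have := Metric.infDist_le_hausdorffDist_of_mem hx hfin
  rwa [Metric.infDist_singleton] at this

end TopologicalSpace.NonemptyCompacts

section hyperMap

variable {X : Type*} [MetricSpace X] (f : X → X) (hf : Continuous f)

theorem coe_hyperMap (K : NonemptyCompacts X) : (hyperMap f hf K : Set X) = f '' K := rfl

theorem hyperMap_singleton (x : X) : hyperMap f hf {x} = {f x} :=
  NonemptyCompacts.ext Set.image_singleton

theorem coe_iterate_hyperMap (K : NonemptyCompacts X) (n : ℕ) :
    (((hyperMap f hf)^[n] K : NonemptyCompacts X) : Set X) = f^[n] '' K := by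
  induction n with
  | zero => simp
  | succ n ih =>
    rw [Function.iterate_succ_apply', coe_hyperMap, ih, ← Set.image_comp,
      ← Function.iterate_succ']

theorem dist_hyperMap_singleton (x y : X) :
    dist (hyperMap f hf {x}) {y} = dist (f x) y := by
  rw [hyperMap_singleton, NonemptyCompacts.isometry_singleton.dist_eq]

theorem dist_iterate_le_dist_iterate_hyperMap {K : NonemptyCompacts X} {z : X} (hz : z ∈ K)
    (n : ℕ) (y : X) : dist (f^[n] z) y ≤ dist ((hyperMap f hf)^[n] K) {y} := by
  apply NonemptyCompacts.dist_le_dist_singleton_of_mem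
  rw [← SetLike.mem_coe, coe_iterate_hyperMap]
  exact Set.mem_image_of_mem _ hz

end hyperMap

theorem eventualShadowing_of_hyperspace_eventualShadowing_general
    {X : Type*} [MetricSpace X]
    (f : X → X) (hf : Continuous f)
    (hsh : ∀ ε > (0:ℝ), ∃ δ > (0:ℝ), ∀ A : ℕ → NonemptyCompacts X,
      (∀ i, dist (hyperMap f hf (A i)) (A (i + 1)) < δ) →
      ∃ B : NonemptyCompacts X, ∃ N : ℕ,
        ∀ i ≥ N, dist ((hyperMap f hf)^[i] B) (A i) < ε) :
    ∀ ε > (0:ℝ), ∃ δ > (0:ℝ), ∀ x : ℕ → X,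
      (∀ i, dist (f (x i)) (x (i + 1)) < δ) →
      ∃ z : X, ∃ N : ℕ, ∀ i ≥ N, dist (f^[i] z) (x i) < ε := by
  intro ε hε
  obtain ⟨δ, hδ, hshadow⟩ := hsh ε hε
  refine ⟨δ, hδ, fun x hx => ?_⟩
  obtain ⟨B, N, hB⟩ := hshadow (fun i => {x i}) fun i => by
    simpa only [dist_hyperMap_singleton] using hx i
  obtain ⟨z, hz⟩ := B.nonempty
  exact ⟨z, N, fun i hi =>
    (dist_iterate_le_dist_iterate_hyperMap f hf hz i (x i)).trans_lt (hB i hi)⟩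

/-- if the hyperspace system (2ˣ, 2ᶠ) has eventual shadowing, then the base
system (X, f) has eventual shadowing. -/
theorem eventualShadowing_of_hyperspace_eventualShadowing
    {X : Type*} [MetricSpace X] [CompactSpace X]
    (f : X → X) (hf : Continuous f)
    (hsh : ∀ ε > (0:ℝ), ∃ δ > (0:ℝ), ∀ A : ℕ → NonemptyCompacts X,
      (∀ i, dist (hyperMap f hf (A i)) (A (i + 1)) < δ) →
      ∃ B : NonemptyCompacts X, ∃ N : ℕ,
        ∀ i ≥ N, dist ((hyperMap f hf)^[i] B) (A i) < ε) :
    ∀ ε > (0:ℝ), ∃ δ > (0:ℝ), ∀ x : ℕ → X,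
      (∀ i, dist (f (x i)) (x (i + 1)) < δ) →
      ∃ z : X, ∃ N : ℕ, ∀ i ≥ N, dist (f^[i] z) (x i) < ε :=
  eventualShadowing_of_hyperspace_eventualShadowing_general f hf hsh
end

section
/- If (X,f) has eventual shadowing, then the induced system (F_2(X), f_2) on the 2-fold symmetric product has eventual shadowing. -/
/-! Lifting a pseudo-orbit of pairs to two pseudo-orbits of points is the heart of the argument:
if `f '' {p, p'}` is `δ`-close to `{a, b}` in the Hausdorff metric, then one of the two ways
of matching `{f p, f p'}` with `{a, b}` moves each point by less than `δ`. Shadowing both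
coordinate pseudo-orbits by `z` and `w`, the pair `{z, w}` shadows the original one. -/

open Filter Topology TopologicalSpace Metric

lemma exists_seq_forall_mem_of_forall_mem_exists_mem {β : Type*} {S : ℕ → Set β}
    {R : ℕ → β → β → Prop} (h₀ : (S 0).Nonempty)
    (hstep : ∀ n, ∀ p ∈ S n, ∃ q ∈ S (n + 1), R n p q) :
    ∃ c : ℕ → β, (∀ n, c n ∈ S n) ∧ ∀ n, R n (c n) (c (n + 1)) := by
  choose! g hgS hgR using hstep
  obtain ⟨p₀, hp₀⟩ := h₀
  let c : ℕ → β := fun n => Nat.rec p₀ (fun k p => g k p) n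
  have hc : ∀ n, c n ∈ S n := fun n => Nat.rec hp₀ (fun k ih => hgS k _ ih) n
  exact ⟨c, hc, fun n => hgR n _ (hc n)⟩

section

variable {X : Type*} [MetricSpace X]

lemma coe_hyperMap_iterate (f : X → X) (hf : Continuous f)
    (B : NonemptyCompacts X) (i : ℕ) :
    ((hyperMap f hf)^[i] B : Set X) = f^[i] '' B := by
  induction i with
  | zero => simp
  | succ n ih =>
      rw [Function.iterate_succ_apply', Function.iterate_succ', Set.image_comp, ← ih]
      rfl

lemma hausdorffDist_pair_le (a b c d : X) :
    hausdorffDist ({a, b} : Set X) {c, d} ≤ max (dist a c) (dist b d) := by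
  refine hausdorffDist_le_of_mem_dist (le_max_of_le_left dist_nonneg) ?_ ?_
  · rintro u (rfl | rfl)
    exacts [⟨c, by simp, le_max_left _ _⟩, ⟨d, by simp, le_max_right _ _⟩]
  · rintro u (rfl | rfl)
    exacts [⟨a, by simp, dist_comm a u ▸ le_max_left _ _⟩,
      ⟨b, by simp, dist_comm b u ▸ le_max_right _ _⟩]

lemma hausdorffEDist_pair_ne_top (a b c d : X) :
    hausdorffEDist ({a, b} : Set X) {c, d} ≠ ⊤ :=
  hausdorffEDist_ne_top_of_nonempty_of_bounded (Set.insert_nonempty _ _)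
    (Set.insert_nonempty _ _) (Set.toFinite _).isBounded (Set.toFinite _).isBounded

lemma exists_pair_eq_dist_lt_of_hausdorffDist_pair_lt {x y a b : X} {δ : ℝ}
    (h : hausdorffDist ({x, y} : Set X) {a, b} < δ) :
    ∃ q : X × X, ({q.1, q.2} : Set X) = {a, b} ∧ dist x q.1 < δ ∧ dist y q.2 < δ := by
  have fin := hausdorffEDist_pair_ne_top x y a b
  have near : ∀ u ∈ ({x, y} : Set X), dist u a < δ ∨ dist u b < δ := fun u hu => by
    obtain ⟨v, hv, huv⟩ := exists_dist_lt_of_hausdorffDist_lt hu h fin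
    rcases hv with rfl | rfl
    exacts [Or.inl huv, Or.inr huv]
  have near' : ∀ v ∈ ({a, b} : Set X), dist x v < δ ∨ dist y v < δ := fun v hv => by
    obtain ⟨u, hu, huv⟩ := exists_dist_lt_of_hausdorffDist_lt' hv h fin
    rcases hu with rfl | rfl
    exacts [Or.inl huv, Or.inr huv]
  rcases near x (by simp) with hxa | hxb <;> rcases near y (by simp) with hya | hyb <;>
    rcases near' a (by simp) with hxa' | hya' <;> rcases near' b (by simp) with hxb' | hyb' <;>
    first
      | exact ⟨(a, b), rfl, by assumption, by assumption⟩
      | exact ⟨(b, a), Set.pair_comm b a, by assumption, by assumption⟩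

lemma exists_pseudoOrbits_of_pair_pseudoOrbit (f : X → X) {δ : ℝ} {A : ℕ → Set X}
    (hA : ∀ n, ∃ a b, A n = {a, b}) (hpo : ∀ n, hausdorffDist (f '' A n) (A (n + 1)) < δ) :
    ∃ x y : ℕ → X, (∀ n, A n = {x n, y n}) ∧ (∀ n, dist (f (x n)) (x (n + 1)) < δ) ∧
      ∀ n, dist (f (y n)) (y (n + 1)) < δ := by
  have h₀ : {p : X × X | A 0 = {p.1, p.2}}.Nonempty := by
    obtain ⟨a, b, hab⟩ := hA 0
    exact ⟨(a, b), hab⟩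
  obtain ⟨c, hcA, hc⟩ := exists_seq_forall_mem_of_forall_mem_exists_mem
    (S := fun n => {p : X × X | A n = {p.1, p.2}})
    (R := fun _ p q => dist (f p.1) q.1 < δ ∧ dist (f p.2) q.2 < δ) h₀ <| by
      intro n p hp
      obtain ⟨a, b, hab⟩ := hA (n + 1)
      have h := hpo n
      rw [show A n = {p.1, p.2} from hp, Set.image_pair, hab] at h
      obtain ⟨q, hq, hq₁, hq₂⟩ := exists_pair_eq_dist_lt_of_hausdorffDist_pair_lt h
      exact ⟨q, hab.trans hq.symm, hq₁, hq₂⟩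
  exact ⟨fun n => (c n).1, fun n => (c n).2, hcA, fun n => (hc n).1, fun n => (hc n).2⟩

end

theorem eventualShadowing_F2_of_eventualShadowing_general
    {X : Type*} [MetricSpace X]
    (f : X → X) (hf : Continuous f)
    (hsh : ∀ ε > (0:ℝ), ∃ δ > (0:ℝ), ∀ x : ℕ → X,
      (∀ i, dist (f (x i)) (x (i + 1)) < δ) →
      ∃ z : X, ∃ N : ℕ, ∀ i ≥ N, dist (f^[i] z) (x i) < ε) :
    ∀ ε > (0:ℝ), ∃ δ > (0:ℝ), ∀ A : ℕ → NonemptyCompacts X,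
      (∀ i, IsF2 (A i)) →
      (∀ i, dist (hyperMap f hf (A i)) (A (i + 1)) < δ) →
      ∃ B : NonemptyCompacts X, IsF2 B ∧
        ∃ N : ℕ, ∀ i ≥ N, dist ((hyperMap f hf)^[i] B) (A i) < ε := by
  intro ε hε
  obtain ⟨δ, hδ, hδsh⟩ := hsh ε hε
  refine ⟨δ, hδ, fun A hA hpo => ?_⟩
  obtain ⟨x, y, hxy, hx, hy⟩ :=
    exists_pseudoOrbits_of_pair_pseudoOrbit f (A := fun n => (A n : Set X)) hA hpo
  obtain ⟨z, N₁, hz⟩ := hδsh x hx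
  obtain ⟨w, N₂, hw⟩ := hδsh y hy
  have hB : (({z} ⊔ {w} : NonemptyCompacts X) : Set X) = {z, w} := by
    rw [NonemptyCompacts.coe_sup, NonemptyCompacts.coe_singleton, NonemptyCompacts.coe_singleton,
      Set.singleton_union]
  refine ⟨{z} ⊔ {w}, ⟨z, w, hB⟩, max N₁ N₂, fun i hi => ?_⟩
  calc dist ((hyperMap f hf)^[i] ({z} ⊔ {w})) (A i)
      = hausdorffDist ({f^[i] z, f^[i] w} : Set X) {x i, y i} := by
        rw [NonemptyCompacts.dist_eq, coe_hyperMap_iterate, hB, Set.image_pair, hxy]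
    _ ≤ max (dist (f^[i] z) (x i)) (dist (f^[i] w) (y i)) := hausdorffDist_pair_le _ _ _ _
    _ < ε := max_lt (hz i (le_of_max_le_left hi)) (hw i (le_of_max_le_right hi))

/-- eventual shadowing of (X, f) implies eventual shadowing of the induced
system on the 2-fold symmetric product F₂(X). -/
theorem eventualShadowing_F2_of_eventualShadowing
    {X : Type*} [MetricSpace X] [CompactSpace X]
    (f : X → X) (hf : Continuous f)
    (hsh : ∀ ε > (0:ℝ), ∃ δ > (0:ℝ), ∀ x : ℕ → X,
      (∀ i, dist (f (x i)) (x (i + 1)) < δ) →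
      ∃ z : X, ∃ N : ℕ, ∀ i ≥ N, dist (f^[i] z) (x i) < ε) :
    ∀ ε > (0:ℝ), ∃ δ > (0:ℝ), ∀ A : ℕ → NonemptyCompacts X,
      (∀ i, IsF2 (A i)) →
      (∀ i, dist (hyperMap f hf (A i)) (A (i + 1)) < δ) →
      ∃ B : NonemptyCompacts X, IsF2 B ∧
        ∃ N : ℕ, ∀ i ≥ N, dist ((hyperMap f hf)^[i] B) (A i) < ε :=
  eventualShadowing_F2_of_eventualShadowing_general f hf hsh
end

section
/- Let φ : (X,f) → (Y,g) be a factor map between compact metric dynamical systems. If (X,f) has eventual shadowing and φ is eALP, then (Y,g) has eventual shadowing. -/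
open Filter Topology

/-- if (X, f) has eventual shadowing and the factor map φ is eALP, then
(Y, g) has eventual shadowing. -/
theorem eventualShadowing_of_factor_eALP
    {X Y : Type*} [MetricSpace X] [CompactSpace X] [MetricSpace Y] [CompactSpace Y]
    (f : X → X) (g : Y → Y) (hf : Continuous f) (hg : Continuous g)
    (φ : X → Y) (hφc : Continuous φ) (hφs : Function.Surjective φ)
    (hsemi : φ ∘ f = g ∘ φ)
    -- (X, f) has eventual shadowing:
    (hsh : ∀ ε > (0:ℝ), ∃ δ > (0:ℝ), ∀ x : ℕ → X,
      (∀ i, dist (f (x i)) (x (i + 1)) < δ) →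
      ∃ z : X, ∃ N : ℕ, ∀ i ≥ N, dist (f^[i] z) (x i) < ε)
    -- φ is eALP:
    (hALP : ∀ ε > (0:ℝ), ∀ η > (0:ℝ), ∃ δ > (0:ℝ), ∀ y : ℕ → Y,
      (∀ i, dist (g (y i)) (y (i + 1)) < δ) →
      ∃ x : ℕ → X, (∀ i, dist (f (x i)) (x (i + 1)) < η) ∧
        ∃ N : ℕ, ∀ i ≥ N, dist (φ (x i)) (y i) < ε) :
    -- (Y, g) has eventual shadowing:
    ∀ ε > (0:ℝ), ∃ δ > (0:ℝ), ∀ y : ℕ → Y,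
      (∀ i, dist (g (y i)) (y (i + 1)) < δ) →
      ∃ z : Y, ∃ N : ℕ, ∀ i ≥ N, dist (g^[i] z) (y i) < ε := by
  intro ε hε
  have hsj : Function.Semiconj φ f g := fun a => congrFun hsemi a
  have huc : UniformContinuous φ := CompactSpace.uniformContinuous_of_continuous hφc
  obtain ⟨α, hα, hαuc⟩ := Metric.uniformContinuous_iff.mp huc (ε/2) (by linarith)
  obtain ⟨η, hη, hηsh⟩ := hsh α hα
  obtain ⟨δ, hδ, hδALP⟩ := hALP (ε/2) (by linarith) η hη
  refine ⟨δ, hδ, fun y hy => ?_⟩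
  obtain ⟨x, hx, N1, hN1⟩ := hδALP y hy
  obtain ⟨z, N2, hN2⟩ := hηsh x hx
  refine ⟨φ z, max N1 N2, fun i hi => ?_⟩
  have h1 : dist (φ (x i)) (y i) < ε/2 := hN1 i (le_trans (le_max_left _ _) hi)
  have h2 : dist (f^[i] z) (x i) < α := hN2 i (le_trans (le_max_right _ _) hi)
  have h3 : g^[i] (φ z) = φ (f^[i] z) := ((hsj.iterate_right i) z).symm
  calc dist (g^[i] (φ z)) (y i) ≤ dist (g^[i] (φ z)) (φ (x i)) + dist (φ (x i)) (y i) :=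
        dist_triangle _ _ _
    _ < ε/2 + ε/2 := by
        apply add_lt_add_of_lt_of_lt _ h1
        rw [h3]; exact hαuc h2
    _ = ε := by ring
end

section
/- A finite (or countable) product of compact metric dynamical systems each having eventual shadowing has eventual shadowing. -/
/-!
Eventual shadowing only concerns the uniform structure, and an entourage of a product contains a
cylinder constraining finitely many coordinates. A pseudo-orbit of the product is a pseudo-orbit
in each of these coordinates; shadow each of them separately and wait until the last of the
finitely many shadowing orbits has caught up.
-/

open Filter Topology Uniformity

attribute [local instance] PiCountable.metricSpace

def HasEventualShadowing {α : Type*} [UniformSpace α] (f : α → α) : Prop :=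
  ∀ U ∈ 𝓤 α, ∃ V ∈ 𝓤 α, ∀ x : ℕ → α, (∀ n, (f (x n), x (n + 1)) ∈ V) →
    ∃ z, ∀ᶠ n in atTop, (f^[n] z, x n) ∈ U

theorem Filter.HasBasis.hasEventualShadowing_iff {α ι : Type*} [UniformSpace α]
    {p : ι → Prop} {s : ι → SetRel α α} (h : (𝓤 α).HasBasis p s) {f : α → α} :
    HasEventualShadowing f ↔ ∀ i, p i → ∃ j, p j ∧ ∀ x : ℕ → α,
      (∀ n, (f (x n), x (n + 1)) ∈ s j) → ∃ z, ∀ᶠ n in atTop, (f^[n] z, x n) ∈ s i := by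
  constructor
  · intro hf i hi
    obtain ⟨V, hV, hshadow⟩ := hf (s i) (h.mem_of_mem hi)
    obtain ⟨j, hj, hjV⟩ := h.mem_iff.1 hV
    exact ⟨j, hj, fun x hx => hshadow x fun n => hjV (hx n)⟩
  · intro hf U hU
    obtain ⟨i, hi, hiU⟩ := h.mem_iff.1 hU
    obtain ⟨j, hj, hshadow⟩ := hf i hi
    refine ⟨s j, h.mem_of_mem hj, fun x hx => ?_⟩
    obtain ⟨z, hz⟩ := hshadow x hx
    exact ⟨z, hz.mono fun n hn => hiU hn⟩

theorem Metric.hasEventualShadowing_iff {α : Type*} [PseudoMetricSpace α] {f : α → α} :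
    HasEventualShadowing f ↔ ∀ ε > (0 : ℝ), ∃ δ > (0 : ℝ), ∀ x : ℕ → α,
      (∀ i, dist (f (x i)) (x (i + 1)) < δ) →
      ∃ z : α, ∃ N : ℕ, ∀ i ≥ N, dist (f^[i] z) (x i) < ε := by
  simp only [Metric.uniformity_basis_dist.hasEventualShadowing_iff, Set.mem_ofPred_eq,
    eventually_atTop, gt_iff_lt]

theorem HasEventualShadowing.pi {ι : Type*} {α : ι → Type*} [∀ i, UniformSpace (α i)]
    {f : ∀ i, α i → α i} (hf : ∀ i, HasEventualShadowing (f i)) :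
    HasEventualShadowing (Pi.map f) := by
  intro U hU
  rw [Pi.uniformity] at hU
  obtain ⟨⟨I, u⟩, ⟨hI, hu⟩, hIU⟩ :=
    (HasBasis.iInf' fun i => (𝓤 (α i)).basis_sets.comap _).mem_iff.1 hU
  choose! v hv hshadow using fun i hi => hf i (u i) (hu i hi)
  refine ⟨⋂ i ∈ I, {p | (p.1 i, p.2 i) ∈ v i},
    (biInter_mem hI).2 fun i hi => Pi.uniformContinuous_proj α i (hv i hi), fun x hx => ?_⟩
  -- Outside `I` the coordinate of the shadowing point is irrelevant.
  have hcoord : ∀ i, ∃ z : α i, i ∈ I → ∀ᶠ n in atTop, ((f i)^[n] z, x n i) ∈ u i := by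
    intro i
    by_cases hi : i ∈ I
    · obtain ⟨z, hz⟩ := hshadow i hi (fun n => x n i) fun n => Set.mem_iInter₂.1 (hx n) i hi
      exact ⟨z, fun _ => hz⟩
    · exact ⟨x 0 i, fun h => absurd h hi⟩
  choose z hz using hcoord
  refine ⟨z, ((hI.eventually_all).2 fun i hi => hz i hi).mono fun n hn => hIU ?_⟩
  simpa only [Set.mem_iInter₂, Set.mem_preimage, id, Pi.map_iterate, Pi.map_apply] using hn

theorem eventualShadowing_pi_general
    {X : ℕ → Type*} [∀ n, MetricSpace (X n)]
    (f : ∀ n, X n → X n)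
    (hsh : ∀ n, ∀ ε > (0:ℝ), ∃ δ > (0:ℝ), ∀ x : ℕ → X n,
      (∀ i, dist (f n (x i)) (x (i + 1)) < δ) →
      ∃ z : X n, ∃ N : ℕ, ∀ i ≥ N, dist ((f n)^[i] z) (x i) < ε) :
    ∀ ε > (0:ℝ), ∃ δ > (0:ℝ), ∀ x : ℕ → (∀ n, X n),
      (∀ i, dist ((fun p n => f n (p n)) (x i)) (x (i + 1)) < δ) →
      ∃ z : ∀ n, X n, ∃ N : ℕ, ∀ i ≥ N,
        dist ((fun p n => f n (p n))^[i] z) (x i) < ε :=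
  Metric.hasEventualShadowing_iff.1 <|
    HasEventualShadowing.pi fun n => Metric.hasEventualShadowing_iff.2 (hsh n)

/-- a countable product of compact metric systems each having eventual
shadowing has eventual shadowing (with a compatible product metric). -/
theorem eventualShadowing_pi
    {X : ℕ → Type*} [∀ n, MetricSpace (X n)] [∀ n, CompactSpace (X n)]
    (f : ∀ n, X n → X n) (hf : ∀ n, Continuous (f n))
    (hsh : ∀ n, ∀ ε > (0:ℝ), ∃ δ > (0:ℝ), ∀ x : ℕ → X n,
      (∀ i, dist (f n (x i)) (x (i + 1)) < δ) →
      ∃ z : X n, ∃ N : ℕ, ∀ i ≥ N, dist ((f n)^[i] z) (x i) < ε) :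
    ∀ ε > (0:ℝ), ∃ δ > (0:ℝ), ∀ x : ℕ → (∀ n, X n),
      (∀ i, dist ((fun p n => f n (p n)) (x i)) (x (i + 1)) < δ) →
      ∃ z : ∀ n, X n, ∃ N : ℕ, ∀ i ≥ N,
        dist ((fun p n => f n (p n))^[i] z) (x i) < ε :=
  eventualShadowing_pi_general f hsh
end

section
/- A finite product of surjective compact metric dynamical systems each having h-shadowing has h-shadowing. -/
open Filter Topology

/-- a finite product of surjective compact metric systems with h-shadowing
has h-shadowing (product taken with the sup metric). -/
theorem hShadowing_pi_of_surjective
    {k : ℕ} {X : Fin k → Type*} [∀ j, MetricSpace (X j)] [∀ j, CompactSpace (X j)]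
    (f : ∀ j, X j → X j) (hf : ∀ j, Continuous (f j))
    (hsurj : ∀ j, Function.Surjective (f j))
    (hsh : ∀ j, ∀ ε > (0:ℝ), ∃ δ > (0:ℝ), ∀ m : ℕ, ∀ x : ℕ → X j,
      (∀ i < m, dist (f j (x i)) (x (i + 1)) < δ) →
      ∃ y : X j, (∀ i < m, dist ((f j)^[i] y) (x i) < ε) ∧ (f j)^[m] y = x m) :
    ∀ ε > (0:ℝ), ∃ δ > (0:ℝ), ∀ m : ℕ, ∀ x : ℕ → (∀ j, X j),
      (∀ i < m, dist ((fun p j => f j (p j)) (x i)) (x (i + 1)) < δ) →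
      ∃ y : ∀ j, X j, (∀ i < m, dist ((fun p j => f j (p j))^[i] y) (x i) < ε) ∧
        (fun p j => f j (p j))^[m] y = x m := by
  have hiter : ∀ (i : ℕ) (y : ∀ j, X j) (j : Fin k),
      ((fun p j => f j (p j))^[i] y) j = (f j)^[i] (y j) := by
    intro i
    induction i with
    | zero => intro y j; simp
    | succ n ih =>
      intro y j
      rw [Function.iterate_succ_apply, Function.iterate_succ_apply]
      exact ih _ j
  intro ε hε
  choose δ hδpos hδ using fun j => hsh j ε hε
  by_cases hk : Nonempty (Fin k)
  · have hne : (Finset.univ : Finset (Fin k)).Nonempty := Finset.univ_nonempty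
    refine ⟨Finset.univ.inf' hne δ, ?_, ?_⟩
    · exact (Finset.lt_inf'_iff hne).mpr fun j _ => hδpos j
    · intro m x hx
      have hcomp : ∀ j, ∀ i < m, dist (f j (x i j)) (x (i + 1) j) < δ j := by
        intro j i hi
        calc dist (f j (x i j)) (x (i + 1) j)
            ≤ dist ((fun p j => f j (p j)) (x i)) (x (i + 1)) := dist_le_pi_dist (fun j => f j (x i j)) (x (i + 1)) j
          _ < Finset.univ.inf' hne δ := hx i hi
          _ ≤ δ j := Finset.inf'_le _ (Finset.mem_univ j)
      choose y hy1 hy2 using fun j => hδ j m (fun i => x i j) (hcomp j)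
      refine ⟨fun j => y j, fun i hi => ?_, ?_⟩
      · rw [dist_pi_lt_iff hε]
        intro j
        rw [hiter]
        exact hy1 j i hi
      · funext j
        rw [hiter]
        exact hy2 j
  · have : IsEmpty (Fin k) := not_nonempty_iff.mp hk
    refine ⟨1, one_pos, fun m x _ => ⟨x m, fun i _ => ?_, Subsingleton.elim _ _⟩⟩
    rw [Subsingleton.elim ((fun p j => f j (p j))^[i] (x m)) (x i)]
    simpa using hε
end

section
/- Let φ : (X,f) → (Y,g) be a factor map between compact metric dynamical systems. If (X,f) has first weak shadowing and φ is w1ALP, then (Y,g) has first weak shadowing. -/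
open Filter Topology

/-- if (X, f) has first weak shadowing and the factor map φ is w1ALP, then
(Y, g) has first weak shadowing. -/
theorem firstWeakShadowing_of_factor_w1ALP
    {X Y : Type*} [MetricSpace X] [CompactSpace X] [MetricSpace Y] [CompactSpace Y]
    (f : X → X) (g : Y → Y) (hf : Continuous f) (hg : Continuous g)
    (φ : X → Y) (hφc : Continuous φ) (hφs : Function.Surjective φ)
    (hsemi : φ ∘ f = g ∘ φ)
    -- (X, f) has first weak shadowing:
    (hsh : ∀ ε > (0:ℝ), ∃ δ > (0:ℝ), ∀ x : ℕ → X,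
      (∀ i, dist (f (x i)) (x (i + 1)) < δ) →
      ∃ z : X, ∀ i, ∃ j : ℕ, dist (x i) (f^[j] z) < ε)
    -- φ is w1ALP:
    (hALP : ∀ ε > (0:ℝ), ∀ η > (0:ℝ), ∃ δ > (0:ℝ), ∀ y : ℕ → Y,
      (∀ i, dist (g (y i)) (y (i + 1)) < δ) →
      ∃ x : ℕ → X, (∀ i, dist (f (x i)) (x (i + 1)) < η) ∧
        ∀ i, ∃ j : ℕ, dist (y i) (φ (x j)) < ε) :
    -- (Y, g) has first weak shadowing:
    ∀ ε > (0:ℝ), ∃ δ > (0:ℝ), ∀ y : ℕ → Y,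
      (∀ i, dist (g (y i)) (y (i + 1)) < δ) →
      ∃ z : Y, ∀ i, ∃ j : ℕ, dist (y i) (g^[j] z) < ε := by
  intro ε hε
  -- uniform continuity of φ
  have hφu : UniformContinuous φ := CompactSpace.uniformContinuous_of_continuous hφc
  obtain ⟨α, hα, hαφ⟩ := Metric.uniformContinuous_iff.mp hφu (ε / 2) (by linarith)
  obtain ⟨η, hη, hηsh⟩ := hsh α hα
  obtain ⟨δ, hδ, hδALP⟩ := hALP (ε / 2) (by linarith) η hη
  refine ⟨δ, hδ, fun y hy => ?_⟩
  obtain ⟨x, hx, hxy⟩ := hδALP y hy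
  obtain ⟨z, hz⟩ := hηsh x hx
  refine ⟨φ z, fun i => ?_⟩
  obtain ⟨j, hj⟩ := hxy i
  obtain ⟨k, hk⟩ := hz j
  refine ⟨k, ?_⟩
  have h1 : dist (φ (x j)) (φ (f^[k] z)) < ε / 2 := hαφ hk
  have h2 : φ (f^[k] z) = g^[k] (φ z) := by
    have := Function.Semiconj.iterate_right (f := φ) (ga := f) (gb := g)
      (fun a => congrFun hsemi a) k z
    simpa using this
  rw [h2] at h1
  calc dist (y i) (g^[k] (φ z)) ≤ dist (y i) (φ (x j)) + dist (φ (x j)) (g^[k] (φ z)) :=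
        dist_triangle _ _ _
    _ < ε / 2 + ε / 2 := by exact add_lt_add hj h1
    _ = ε := by ring
end

section
/- For the product of two copies of an irrational circle rotation, the product system does not have first weak shadowing (although each factor has strong orbital shadowing). -/
/-!
Every orbit of the diagonal rotation `(x, y) ↦ (x + α, y + α)` keeps `y - x` constant. The orbit of the slightly different rotation `(x, y) ↦ (x + α, y + α + b)`
with `‖b‖` small is a pseudo-orbit of the diagonal one whose difference `i • b` walks from `0`
to the antipode `1/2`; no single true orbit can stay `1/8`-close to both ends.
-/

section DiagonalTranslation

variable {G : Type*} [SeminormedAddCommGroup G]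

lemma dist_nsmul_add_nsmul_succ (u v : G) (i : ℕ) : dist (i • v + u) ((i + 1) • v) = ‖u - v‖ := by
  rw [dist_eq_norm, succ_nsmul]
  congr 1
  abel

lemma le_dist_or_le_dist_of_add_le_dist {X : Type*} [PseudoMetricSpace X] {x y : X} {r s : ℝ}
    (h : r + s ≤ dist x y) (z : X) : r ≤ dist z x ∨ s ≤ dist z y := by
  by_contra! hz
  linarith [dist_triangle_left x y z]

lemma dist_snd_sub_fst_le (p q : G × G) : dist (p.2 - p.1) (q.2 - q.1) ≤ 2 * dist p q := by
  rw [Prod.dist_eq]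
  calc dist (p.2 - p.1) (q.2 - q.1) ≤ dist p.2 q.2 + dist p.1 q.1 := dist_sub_sub_le _ _ _ _
    _ ≤ 2 * max (dist p.1 q.1) (dist p.2 q.2) := by
      linarith [le_max_left (dist p.1 q.1) (dist p.2 q.2), le_max_right (dist p.1 q.1) (dist p.2 q.2)]

lemma snd_sub_fst_iterate_add_diag (a : G) (w : G × G) (n : ℕ) :
    ((· + (a, a))^[n] w).2 - ((· + (a, a))^[n] w).1 = w.2 - w.1 := by
  simp only [add_right_iterate, Prod.smul_mk, Prod.fst_add, Prod.snd_add]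
  abel

theorem exists_pseudoOrbit_not_firstWeakShadowed_add_diag {ε δ : ℝ} (a b : G) (hb : ‖b‖ < δ)
    (N : ℕ) (hN : 4 * ε ≤ ‖N • b‖) :
    ∃ z : ℕ → G × G, (∀ i, dist (z i + (a, a)) (z (i + 1)) < δ) ∧
      ∀ w : G × G, ∃ i, ∀ n : ℕ, ε ≤ dist ((· + (a, a))^[n] w) (z i) := by
  refine ⟨fun i => i • (a, a + b), fun i => ?_, fun w => ?_⟩
  · rw [dist_nsmul_add_nsmul_succ, Prod.mk_sub_mk, sub_self, sub_add_cancel_left,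
      Prod.norm_mk, norm_zero, norm_neg, max_eq_right (norm_nonneg b)]
    exact hb
  · have hdiff (i : ℕ) : (i • (a, a + b)).2 - (i • (a, a + b)).1 = i • b := by
      simp only [Prod.smul_mk, smul_add, add_sub_cancel_left]
    have hends : 2 * ε + 2 * ε ≤ dist ((0 : ℕ) • b) (N • b) := by
      rw [zero_nsmul, dist_zero_left]
      linarith
    have hshadow (i : ℕ) (hi : 2 * ε ≤ dist (w.2 - w.1) (i • b)) (n : ℕ) :
        ε ≤ dist ((· + (a, a))^[n] w) (i • (a, a + b)) := by
      have := dist_snd_sub_fst_le ((· + (a, a))^[n] w) (i • (a, a + b))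
      rw [snd_sub_fst_iterate_add_diag, hdiff] at this
      linarith
    rcases le_dist_or_le_dist_of_add_le_dist hends (w.2 - w.1) with h | h
    exacts [⟨0, hshadow 0 h⟩, ⟨N, hshadow N h⟩]

end DiagonalTranslation

lemma AddCircle.exists_norm_lt_nsmul_eq_half_period (p : ℝ) {δ : ℝ} (hδ : 0 < δ) :
    ∃ b : AddCircle p, ‖b‖ < δ ∧ ∃ N : ℕ, N • b = ((p / 2 : ℝ) : AddCircle p) := by
  obtain ⟨N, hN⟩ := exists_nat_gt (|p| / δ)
  have hN0 : (0 : ℝ) < N := lt_of_le_of_lt (by positivity) hN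
  refine ⟨((p / (2 * N) : ℝ) : AddCircle p), ?_, N, ?_⟩
  · calc ‖((p / (2 * N) : ℝ) : AddCircle p)‖ ≤ |p / (2 * N)| :=
          QuotientAddGroup.norm_mk_le_norm (S := AddSubgroup.zmultiples p)
      _ = |p| / (2 * N) := by rw [abs_div, abs_of_pos (by positivity : (0 : ℝ) < 2 * N)]
      _ < δ := by
          rw [div_lt_iff₀ (by positivity)]
          rw [div_lt_iff₀ hδ] at hN
          nlinarith
  · rw [← AddCircle.coe_nsmul, nsmul_eq_mul]
    congr 1
    field_simp

theorem product_circle_rotation_not_firstWeakShadowing_general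
    (α : ℝ) :
    ∃ ε > (0:ℝ), ∀ δ > (0:ℝ),
      ∃ z : ℕ → AddCircle (1:ℝ) × AddCircle (1:ℝ),
        (∀ i, dist ((fun p : AddCircle (1:ℝ) × AddCircle (1:ℝ) =>
            (p.1 + (α : AddCircle (1:ℝ)), p.2 + (α : AddCircle (1:ℝ)))) (z i)) (z (i + 1)) < δ) ∧
        ∀ w : AddCircle (1:ℝ) × AddCircle (1:ℝ), ∃ i, ∀ n : ℕ,
          ε ≤ dist ((fun p : AddCircle (1:ℝ) × AddCircle (1:ℝ) =>
            (p.1 + (α : AddCircle (1:ℝ)), p.2 + (α : AddCircle (1:ℝ))))^[n] w) (z i) := by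
  refine ⟨1 / 8, by norm_num, fun δ hδ => ?_⟩
  obtain ⟨b, hb, N, hNb⟩ := AddCircle.exists_norm_lt_nsmul_eq_half_period 1 hδ
  have hfar : 4 * (1 / 8 : ℝ) ≤ ‖N • b‖ := by
    rw [hNb, AddCircle.norm_half_period_eq]
    norm_num
  exact exists_pseudoOrbit_not_firstWeakShadowed_add_diag (α : AddCircle (1 : ℝ)) b hb N hfar

/-- the product of two copies of an irrational circle rotation does not
have first weak shadowing: there is ε > 0 such that for every δ > 0 some δ-pseudo-orbit
in the product is not ε-first-weak-shadowed by any point. -/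
theorem product_circle_rotation_not_firstWeakShadowing
    (α : ℝ) (hα : Irrational α) :
    ∃ ε > (0:ℝ), ∀ δ > (0:ℝ),
      ∃ z : ℕ → AddCircle (1:ℝ) × AddCircle (1:ℝ),
        (∀ i, dist ((fun p : AddCircle (1:ℝ) × AddCircle (1:ℝ) =>
            (p.1 + (α : AddCircle (1:ℝ)), p.2 + (α : AddCircle (1:ℝ)))) (z i)) (z (i + 1)) < δ) ∧
        ∀ w : AddCircle (1:ℝ) × AddCircle (1:ℝ), ∃ i, ∀ n : ℕ,
          ε ≤ dist ((fun p : AddCircle (1:ℝ) × AddCircle (1:ℝ) =>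
            (p.1 + (α : AddCircle (1:ℝ)), p.2 + (α : AddCircle (1:ℝ))))^[n] w) (z i) :=
  product_circle_rotation_not_firstWeakShadowing_general α
end

section
/- An arbitrary (countable) product of compact metric dynamical systems each having limit shadowing has limit shadowing. -/
open Filter Topology

attribute [local instance] PiCountable.metricSpace

/-!
The metric `PiCountable.metricSpace` induces the product uniformity, so a sequence of pairs
of points of the product is asymptotic exactly when each of its coordinate sequences is.
Hence an asymptotic pseudo-orbit of the product map has asymptotic pseudo-orbits as
coordinates; shadowing each of them by some `z n` gives a point `z` whose orbit is
asymptotic to the pseudo-orbit in every coordinate, hence in the product.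
-/

section LimitShadowing

variable {α : Type*} [PseudoMetricSpace α]

def IsAsymptoticPseudoOrbit (f : α → α) (x : ℕ → α) : Prop :=
  Tendsto (fun i => dist (f (x i)) (x (i + 1))) atTop (𝓝 0)

def IsAsymptoticShadow (f : α → α) (x : ℕ → α) (z : α) : Prop :=
  Tendsto (fun i => dist (f^[i] z) (x i)) atTop (𝓝 0)

def HasLimitShadowing (f : α → α) : Prop :=
  ∀ x, IsAsymptoticPseudoOrbit f x → ∃ z, IsAsymptoticShadow f x z

end LimitShadowing

theorem PiCountable.tendsto_dist_zero_iff {ι β : Type*} [Encodable ι] {F : ι → Type*}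
    [∀ i, MetricSpace (F i)] {a b : β → ∀ i, F i} {l : Filter β} :
    Tendsto (fun k => dist (a k) (b k)) l (𝓝 0) ↔
      ∀ i, Tendsto (fun k => dist (a k i) (b k i)) l (𝓝 0) := by
  rw [← tendsto_uniformity_iff_dist_tendsto_zero (f := fun k => (a k, b k))]
  simp only [Pi.uniformity, tendsto_iInf, tendsto_comap_iff, Function.comp_def,
    tendsto_uniformity_iff_dist_tendsto_zero]

theorem Pi.map_iterate_apply {ι : Type*} {F : ι → Type*} (f : ∀ i, F i → F i)
    (n : ℕ) (z : ∀ i, F i) (i : ι) : (Pi.map f)^[n] z i = (f i)^[n] (z i) :=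
  Function.Semiconj.iterate_right (f := Function.eval i) (fun _ => rfl) n z

theorem HasLimitShadowing.pi {ι : Type*} [Encodable ι] {F : ι → Type*}
    [∀ i, MetricSpace (F i)] {f : ∀ i, F i → F i} (hf : ∀ i, HasLimitShadowing (f i)) :
    HasLimitShadowing (Pi.map f) := by
  intro x hx
  have hcoord : ∀ i, IsAsymptoticPseudoOrbit (f i) (fun k => x k i) :=
    PiCountable.tendsto_dist_zero_iff.1 hx
  choose z hz using fun i => hf i _ (hcoord i)
  refine ⟨z, PiCountable.tendsto_dist_zero_iff.2 fun i => ?_⟩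
  simp only [Pi.map_iterate_apply]
  exact hz i

theorem limitShadowing_pi_general
    {X : ℕ → Type*} [∀ n, MetricSpace (X n)]
    (f : ∀ n, X n → X n)
    (hsh : ∀ n, ∀ x : ℕ → X n,
      Tendsto (fun i => dist (f n (x i)) (x (i + 1))) atTop (nhds 0) →
      ∃ z : X n, Tendsto (fun i => dist ((f n)^[i] z) (x i)) atTop (nhds 0)) :
    ∀ x : ℕ → (∀ n, X n),
      Tendsto (fun i => dist ((fun p n => f n (p n)) (x i)) (x (i + 1))) atTop (nhds 0) →
      ∃ z : ∀ n, X n,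
        Tendsto (fun i => dist ((fun p n => f n (p n))^[i] z) (x i)) atTop (nhds 0) :=
  HasLimitShadowing.pi hsh

/-- a countable product of compact metric systems each having limit
shadowing has limit shadowing (with a compatible product metric). -/
theorem limitShadowing_pi
    {X : ℕ → Type*} [∀ n, MetricSpace (X n)] [∀ n, CompactSpace (X n)]
    (f : ∀ n, X n → X n) (hf : ∀ n, Continuous (f n))
    (hsh : ∀ n, ∀ x : ℕ → X n,
      Tendsto (fun i => dist (f n (x i)) (x (i + 1))) atTop (nhds 0) →
      ∃ z : X n, Tendsto (fun i => dist ((f n)^[i] z) (x i)) atTop (nhds 0)) :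
    ∀ x : ℕ → (∀ n, X n),
      Tendsto (fun i => dist ((fun p n => f n (p n)) (x i)) (x (i + 1))) atTop (nhds 0) →
      ∃ z : ∀ n, X n,
        Tendsto (fun i => dist ((fun p n => f n (p n))^[i] z) (x i)) atTop (nhds 0) :=
  limitShadowing_pi_general f hsh
end

section
/- Let α be irrational and f : ℝ/ℤ → ℝ/ℤ the rotation x ↦ x + α. Then the induced hyperspace system (2^{ℝ/ℤ}, 2^f) does not have orbital limit shadowing: there is an asymptotic pseudo-orbit (A_i) in 2^{ℝ/ℤ} such that no A ∈ 2^{ℝ/ℤ} satisfies ω(A) = ω((A_i)). -/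
open Filter Topology TopologicalSpace

/-- Triangle-wave sequence: on the block `[k², (k+1)²)` it goes `0 → 1/4 → 0` linearly. -/
noncomputable def delSeq (i : ℕ) : ℝ :=
  ((Nat.sqrt i : ℝ) - |(i : ℝ) - (Nat.sqrt i : ℝ) ^ 2 - (Nat.sqrt i : ℝ)|) /
    (4 * (Nat.sqrt i : ℝ))

lemma delSeq_sq (k : ℕ) : delSeq (k * k) = 0 := by
  unfold delSeq
  rw [Nat.sqrt_eq]
  have h : ((k * k : ℕ) : ℝ) - (k : ℝ) ^ 2 - (k : ℝ) = -(k : ℝ) := by push_cast; ring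
  rw [h, abs_neg, Nat.abs_cast, sub_self, zero_div]

lemma delSeq_mid (k : ℕ) (hk : 1 ≤ k) : delSeq (k * k + k) = 1 / 4 := by
  have h : Nat.sqrt (k * k + k) = k := Nat.sqrt_add_eq k (by omega)
  unfold delSeq
  rw [h]
  have h2 : ((k * k + k : ℕ) : ℝ) - (k : ℝ) ^ 2 - (k : ℝ) = 0 := by push_cast; ring
  rw [h2, abs_zero, sub_zero]
  have hk' : (k : ℝ) ≠ 0 := Nat.cast_ne_zero.mpr (by omega)
  field_simp

lemma delSeq_step (i : ℕ) :
    |delSeq (i + 1) - delSeq i| ≤ 1 / (4 * (Nat.sqrt i : ℝ)) := by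
  rcases Nat.eq_zero_or_pos i with rfl | hi
  · norm_num [delSeq]
  have hk1 : 1 ≤ Nat.sqrt i := Nat.one_le_iff_ne_zero.mpr
    (fun h => by rw [Nat.sqrt_eq_zero] at h; omega)
  set k := Nat.sqrt i with hk
  have hkR : (0:ℝ) < (k : ℝ) := by exact_mod_cast hk1
  have hcase : Nat.sqrt (i + 1) = k ∨ i + 1 = (k + 1) * (k + 1) := by
    have h1 : k ≤ Nat.sqrt (i + 1) := Nat.sqrt_le_sqrt (Nat.le_succ i)
    have h2 : Nat.sqrt (i + 1) ≤ k + 1 := Nat.sqrt_succ_le_succ_sqrt i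
    rcases eq_or_lt_of_le h2 with h2 | h2
    · right
      have h3 : (k + 1) * (k + 1) ≤ i + 1 := by
        have := Nat.sqrt_le (i + 1); rw [h2] at this; exact this
      have h4 : i + 1 ≤ (k + 1) * (k + 1) := by
        have := Nat.lt_succ_sqrt i; rw [← hk] at this; exact this
      exact le_antisymm h4 h3
    · left; omega
  rcases hcase with h | h
  · unfold delSeq
    rw [h, ← hk, div_sub_div_same, abs_div, abs_of_pos (by positivity : (0:ℝ) < 4 * (k:ℝ))]
    gcongr
    have e : ((k : ℝ) - |((i + 1 : ℕ) : ℝ) - (k : ℝ) ^ 2 - (k : ℝ)|) -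
        ((k : ℝ) - |(i : ℝ) - (k : ℝ) ^ 2 - (k : ℝ)|) =
        |(i : ℝ) - (k : ℝ) ^ 2 - (k : ℝ)| - |((i : ℝ) + 1) - (k : ℝ) ^ 2 - (k : ℝ)| := by
      push_cast; ring
    rw [e]
    calc |(|(i : ℝ) - (k : ℝ) ^ 2 - (k : ℝ)| - |((i : ℝ) + 1) - (k : ℝ) ^ 2 - (k : ℝ)|)|
        ≤ |((i : ℝ) - (k : ℝ) ^ 2 - (k : ℝ)) - (((i : ℝ) + 1) - (k : ℝ) ^ 2 - (k : ℝ))| :=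
          abs_abs_sub_abs_le_abs_sub _ _
      _ = 1 := by norm_num
  · have hle : k * k ≤ i := by have := Nat.sqrt_le i; rw [← hk] at this; exact this
    have hexp : (k + 1) * (k + 1) = k * k + 2 * k + 1 := by ring
    have hi' : i = k * k + 2 * k := by omega
    have hs1 : Nat.sqrt (i + 1) = k + 1 := by rw [h]; exact Nat.sqrt_eq (k + 1)
    have e1 : delSeq i = 0 := by
      unfold delSeq
      rw [← hk]
      have h2 : (i : ℝ) - (k : ℝ) ^ 2 - (k : ℝ) = (k : ℝ) := by
        rw [hi']; push_cast; ring
      rw [h2, Nat.abs_cast, sub_self, zero_div]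
    have e2 : delSeq (i + 1) = 0 := by
      unfold delSeq
      rw [hs1]
      have h2 : ((i + 1 : ℕ) : ℝ) - ((k + 1 : ℕ) : ℝ) ^ 2 - ((k + 1 : ℕ) : ℝ) =
          -((k + 1 : ℕ) : ℝ) := by rw [h]; push_cast; ring
      rw [h2, abs_neg, Nat.abs_cast, sub_self, zero_div]
    rw [e1, e2]
    simp only [sub_zero, abs_zero]
    positivity

lemma norm_coe_le_abs (x : ℝ) : ‖((x : ℝ) : AddCircle (1:ℝ))‖ ≤ |x| := by
  rw [AddCircle.norm_eq]
  simpa using round_le x 0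

lemma dist_coe_le_abs (a b : ℝ) :
    dist ((a : ℝ) : AddCircle (1:ℝ)) ((b : ℝ) : AddCircle (1:ℝ)) ≤ |a - b| := by
  rw [dist_eq_norm, ← QuotientAddGroup.mk_sub]
  exact norm_coe_le_abs _

lemma pair_hausdorffDist_le (y : AddCircle (1:ℝ)) (a b : ℝ) :
    Metric.hausdorffDist ({y, y + ((a : ℝ) : AddCircle (1:ℝ))} : Set (AddCircle (1:ℝ)))
      {y, y + ((b : ℝ) : AddCircle (1:ℝ))} ≤ |a - b| := by
  apply Metric.hausdorffDist_le_of_mem_dist (abs_nonneg _)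
  · rintro x (rfl | rfl)
    · exact ⟨x, Set.mem_insert _ _, by simp [abs_nonneg]⟩
    · refine ⟨y + ((b : ℝ) : AddCircle (1:ℝ)), Set.mem_insert_of_mem _ rfl, ?_⟩
      rw [dist_add_left]
      exact dist_coe_le_abs a b
  · rintro x (rfl | rfl)
    · exact ⟨x, Set.mem_insert _ _, by simp [abs_nonneg]⟩
    · refine ⟨y + ((a : ℝ) : AddCircle (1:ℝ)), Set.mem_insert_of_mem _ rfl, ?_⟩
      rw [dist_add_left, dist_comm]
      exact dist_coe_le_abs a b

lemma diam_le_diam_add {X : Type*} [MetricSpace X] (S T : NonemptyCompacts X) :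
    Metric.diam (S : Set X) ≤ Metric.diam (T : Set X) + 2 * dist S T := by
  rw [Metric.NonemptyCompacts.dist_eq]
  refine le_of_forall_pos_le_add fun ε hε => ?_
  have fin : EMetric.hausdorffEdist (S : Set X) (T : Set X) ≠ ⊤ :=
    Metric.hausdorffEdist_ne_top_of_nonempty_of_bounded S.nonempty T.nonempty
      S.isCompact.isBounded T.isCompact.isBounded
  have hd0 : (0:ℝ) ≤ Metric.diam (T : Set X) := Metric.diam_nonneg
  have hh0 : (0:ℝ) ≤ Metric.hausdorffDist (S : Set X) (T : Set X) := Metric.hausdorffDist_nonneg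
  apply Metric.diam_le_of_forall_dist_le (by linarith)
  intro x hx y hy
  obtain ⟨x', hx', hxd⟩ := Metric.exists_dist_lt_of_hausdorffDist_lt hx
    (lt_add_of_pos_right _ (by linarith : (0:ℝ) < ε / 2)) fin
  obtain ⟨y', hy', hyd⟩ := Metric.exists_dist_lt_of_hausdorffDist_lt hy
    (lt_add_of_pos_right _ (by linarith : (0:ℝ) < ε / 2)) fin
  have h1 : dist x' y' ≤ Metric.diam (T : Set X) :=
    Metric.dist_le_diam_of_mem T.isCompact.isBounded hx' hy'
  have h2 : dist x y ≤ dist x x' + dist x' y' + dist y' y := dist_triangle4 x x' y' y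
  have h3 : dist y' y = dist y y' := dist_comm _ _
  linarith

lemma diam_continuous (X : Type*) [MetricSpace X] :
    Continuous (fun S : NonemptyCompacts X => Metric.diam (S : Set X)) := by
  refine LipschitzWith.continuous (K := 2) (LipschitzWith.of_dist_le_mul fun S T => ?_)
  rw [Real.dist_eq]
  have h1 := diam_le_diam_add S T
  have h2 := diam_le_diam_add T S
  rw [dist_comm] at h2
  have hc : ((2 : NNReal) : ℝ) = 2 := by norm_num
  rw [hc, abs_sub_le_iff]
  constructor <;> linarith

lemma mapClusterPt_const_real {y c : ℝ} (h : MapClusterPt y atTop (fun _ : ℕ => c)) :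
    y = c := by
  have h2 : ClusterPt y (pure c) := by
    have := h.clusterPt
    rwa [Filter.map_const] at this
  have h3 : y ∈ closure ({c} : Set ℝ) := by
    rw [mem_closure_iff_clusterPt]
    rwa [Filter.principal_singleton]
  simpa using h3

lemma hyperMap_iterate_diam {X : Type*} [MetricSpace X] (f : X → X) (hf : Continuous f)
    (hiso : Isometry f) (B : NonemptyCompacts X) (n : ℕ) :
    Metric.diam (((hyperMap f hf)^[n] B : NonemptyCompacts X) : Set X) =
      Metric.diam (B : Set X) := by
  induction n with
  | zero => rfl
  | succ n ih =>
    rw [Function.iterate_succ_apply']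
    have h : ((hyperMap f hf ((hyperMap f hf)^[n] B) : NonemptyCompacts X) : Set X) =
        f '' (((hyperMap f hf)^[n] B : NonemptyCompacts X) : Set X) := rfl
    rw [h, hiso.diam_image, ih]

/-- for an irrational rotation f of the circle ℝ/ℤ, the induced hyperspace
system does not have orbital limit shadowing: there is an asymptotic pseudo-orbit (Aᵢ)
in 2^{ℝ/ℤ} whose set of limit points differs from the ω-limit set of every point
B ∈ 2^{ℝ/ℤ}. -/
theorem circle_rotation_hyperspace_not_orbitalLimitShadowing
    (α : ℝ) (hα : Irrational α) :
    ∃ A : ℕ → NonemptyCompacts (AddCircle (1:ℝ)),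
      Tendsto (fun i => dist (hyperMap (fun x => x + (α : AddCircle (1:ℝ)))
        (continuous_add_right _) (A i)) (A (i + 1))) atTop (nhds 0) ∧
      ∀ B : NonemptyCompacts (AddCircle (1:ℝ)),
        {C : NonemptyCompacts (AddCircle (1:ℝ)) |
            MapClusterPt C atTop fun n =>
              (hyperMap (fun x => x + (α : AddCircle (1:ℝ)))
                (continuous_add_right _))^[n] B} ≠
          {C : NonemptyCompacts (AddCircle (1:ℝ)) | MapClusterPt C atTop A} := by
  haveI : Fact ((0:ℝ) < 1) := ⟨one_pos⟩
  set f : AddCircle (1:ℝ) → AddCircle (1:ℝ) := fun x => x + (α : AddCircle (1:ℝ)) with hf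
  have hfc : Continuous f := continuous_add_right _
  have hiso : Isometry f := Isometry.of_dist_eq fun a b => dist_add_right a b _
  -- the pseudo-orbit
  set A : ℕ → NonemptyCompacts (AddCircle (1:ℝ)) := fun i =>
    ⟨⟨{i • (α : AddCircle (1:ℝ)),
        i • (α : AddCircle (1:ℝ)) + ((delSeq i : ℝ) : AddCircle (1:ℝ))},
      ((Set.finite_singleton _).insert _).isCompact⟩, ⟨_, Set.mem_insert _ _⟩⟩ with hA
  refine ⟨A, ?_, ?_⟩
  · -- asymptotic pseudo-orbit
    have hdistle : ∀ i, dist (hyperMap f hfc (A i)) (A (i + 1)) ≤ 1 / (4 * (Nat.sqrt i : ℝ)) := by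
      intro i
      rw [Metric.NonemptyCompacts.dist_eq]
      have hcar : ((hyperMap f hfc (A i) : NonemptyCompacts _) : Set (AddCircle (1:ℝ))) =
          {(i + 1) • (α : AddCircle (1:ℝ)),
            (i + 1) • (α : AddCircle (1:ℝ)) + ((delSeq i : ℝ) : AddCircle (1:ℝ))} := by
        show f '' {i • (α : AddCircle (1:ℝ)),
            i • (α : AddCircle (1:ℝ)) + ((delSeq i : ℝ) : AddCircle (1:ℝ))} = _
        rw [Set.image_pair]
        simp only [hf, succ_nsmul]
        rw [add_right_comm]
      rw [hcar]
      have hcar2 : ((A (i + 1) : NonemptyCompacts _) : Set (AddCircle (1:ℝ))) =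
          {(i + 1) • (α : AddCircle (1:ℝ)),
            (i + 1) • (α : AddCircle (1:ℝ)) + ((delSeq (i + 1) : ℝ) : AddCircle (1:ℝ))} := rfl
      rw [hcar2]
      calc Metric.hausdorffDist _ _ ≤ |delSeq i - delSeq (i + 1)| :=
            pair_hausdorffDist_le _ _ _
        _ = |delSeq (i + 1) - delSeq i| := abs_sub_comm _ _
        _ ≤ 1 / (4 * (Nat.sqrt i : ℝ)) := delSeq_step i
    have hg : Tendsto (fun i : ℕ => 1 / (4 * (Nat.sqrt i : ℝ))) atTop (𝓝 0) := by
      have hsq : Tendsto Nat.sqrt atTop atTop :=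
        tendsto_atTop_atTop_of_monotone (fun _ _ h => Nat.sqrt_le_sqrt h)
          (fun b => ⟨b * b, (Nat.sqrt_eq b).ge⟩)
      have hcast : Tendsto (fun i : ℕ => (Nat.sqrt i : ℝ)) atTop atTop :=
        tendsto_natCast_atTop_atTop.comp hsq
      have h4 : Tendsto (fun i : ℕ => 4 * (Nat.sqrt i : ℝ)) atTop atTop :=
        hcast.const_mul_atTop (by norm_num)
      have h5 := h4.inv_tendsto_atTop
      simp only [one_div]
      exact h5
    exact squeeze_zero (fun i => dist_nonneg) hdistle hg
  · -- no orbit has the same cluster set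
    intro B hset
    set D : NonemptyCompacts (AddCircle (1:ℝ)) → ℝ :=
      fun S => Metric.diam (S : Set (AddCircle (1:ℝ))) with hD
    have horb : ∀ C, MapClusterPt C atTop (fun n => (hyperMap f hfc)^[n] B) → D C = D B := by
      intro C hC
      have h1 : MapClusterPt (D C) atTop (D ∘ fun n => (hyperMap f hfc)^[n] B) :=
        MapClusterPt.continuousAt_comp (diam_continuous _).continuousAt hC
      have h2 : (D ∘ fun n => (hyperMap f hfc)^[n] B) = fun _ => D B :=
        funext fun n => hyperMap_iterate_diam f hfc hiso B n
      rw [h2] at h1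
      exact mapClusterPt_const_real h1
    have exC : ∀ (c : ℝ) (ψ : ℕ → ℕ), Tendsto ψ atTop atTop → (∀ k, D (A (ψ k)) = c) →
        ∃ C, MapClusterPt C atTop A ∧ D C = c := by
      intro c ψ hψ hc
      obtain ⟨C, hC⟩ := exists_clusterPt_of_compactSpace (map (A ∘ ψ) atTop)
      have hC' : MapClusterPt C atTop (A ∘ ψ) := hC
      refine ⟨C, hC'.of_comp hψ, ?_⟩
      have h1 : MapClusterPt (D C) atTop (D ∘ (A ∘ ψ)) :=
        MapClusterPt.continuousAt_comp (diam_continuous _).continuousAt hC'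
      have h2 : D ∘ (A ∘ ψ) = fun _ => c := funext fun k => hc k
      rw [h2] at h1
      exact mapClusterPt_const_real h1
    have hD0 : ∀ k : ℕ, D (A (k * k)) = 0 := by
      intro k
      show Metric.diam ({(k * k) • (α : AddCircle (1:ℝ)),
        (k * k) • (α : AddCircle (1:ℝ)) + ((delSeq (k * k) : ℝ) : AddCircle (1:ℝ))} :
          Set (AddCircle (1:ℝ))) = 0
      rw [delSeq_sq]
      simp [Metric.diam_pair]
    have hD1 : ∀ k : ℕ, D (A ((k + 1) * (k + 1) + (k + 1))) = 1 / 4 := by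
      intro k
      show Metric.diam ({((k + 1) * (k + 1) + (k + 1)) • (α : AddCircle (1:ℝ)),
        ((k + 1) * (k + 1) + (k + 1)) • (α : AddCircle (1:ℝ)) +
          ((delSeq ((k + 1) * (k + 1) + (k + 1)) : ℝ) : AddCircle (1:ℝ))} :
            Set (AddCircle (1:ℝ))) = 1 / 4
      rw [delSeq_mid (k + 1) (by omega), Metric.diam_pair, dist_self_add_right]
      rw [(AddCircle.norm_coe_eq_abs_iff (p := (1:ℝ)) one_ne_zero).mpr (by rw [abs_of_nonneg (by norm_num : (0:ℝ) ≤ 1/4)]; norm_num)]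
      norm_num
    have hψ0 : Tendsto (fun k : ℕ => k * k) atTop atTop := by
      apply tendsto_atTop_mono _ tendsto_id
      intro k
      rcases k with _ | k
      · simp
      · exact Nat.le_mul_of_pos_left _ (Nat.succ_pos k)
    have hψ1 : Tendsto (fun k : ℕ => (k + 1) * (k + 1) + (k + 1)) atTop atTop := by
      apply tendsto_atTop_mono _ tendsto_id
      intro k
      exact (Nat.le_succ k).trans (Nat.le_add_left _ _)
    obtain ⟨C0, hC0A, hC0D⟩ := exC 0 (fun k => k * k) hψ0 hD0
    obtain ⟨C1, hC1A, hC1D⟩ := exC (1 / 4) (fun k => (k + 1) * (k + 1) + (k + 1)) hψ1 hD1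
    have m0 : C0 ∈ {C : NonemptyCompacts (AddCircle (1:ℝ)) | MapClusterPt C atTop A} := hC0A
    have m1 : C1 ∈ {C : NonemptyCompacts (AddCircle (1:ℝ)) | MapClusterPt C atTop A} := hC1A
    rw [← hset] at m0 m1
    have e0 : D C0 = D B := horb C0 m0
    have e1 : D C1 = D B := horb C1 m1
    rw [hC0D] at e0
    rw [hC1D] at e1
    norm_num [← e0] at e1
end
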